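/- arXiv:2006.00291 — 6 statements merged into one kernel-verified Lean document; each statement's English description precedes it below -/
import Mathlib

section
/- Let p, q be distinct primes. The map γ sending each (ZMod p, ZMod q)-linearly closed clonoid C to the set γ(C) = {f : (ZMod p)^n × (ZMod q)^n → ZMod p × ZMod q : ∃ g ∈ C of arity n, a ∈ (ZMod p)^n, b ∈ (ZMod q)^n with f(x,y) = (⟨a,x⟩ + g(y), ⟨b,y⟩) for all (x,y)} is a well-defined map into clones: γ(C) contains all projections, contains the binary addition of ZMod p × ZMod q, and is closed under composition. -/
/-- A `(ZMod p, ZMod q)`-linearly closed clonoid. -/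
def IsLinClosedClonoid (p q : ℕ) (C : ∀ n : ℕ, Set ((Fin n → ZMod q) → ZMod p)) : Prop :=
  (∃ n, (C n).Nonempty) ∧
  (∀ (n : ℕ) (a b : ZMod p) (f g : (Fin n → ZMod q) → ZMod p), f ∈ C n → g ∈ C n →
    (fun x => a * f x + b * g x) ∈ C n) ∧
  (∀ (m n : ℕ) (f : (Fin m → ZMod q) → ZMod p) (A : Matrix (Fin m) (Fin n) (ZMod q)),
    f ∈ C m → (fun x => f (fun i => ∑ j, A i j * x j)) ∈ C n)

/-- A clone on a set `A`. -/
def IsClone {A : Type*} (C : ∀ n : ℕ, Set ((Fin n → A) → A)) : Prop :=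
  (∀ (n : ℕ) (i : Fin n), (fun x => x i) ∈ C n) ∧
  ∀ (n m : ℕ) (f : (Fin n → A) → A) (g : Fin n → (Fin m → A) → A),
    f ∈ C n → (∀ i, g i ∈ C m) → (fun x => f (fun i => g i x)) ∈ C m

/-- The map γ from clonoids to sets of operations on `ZMod p × ZMod q`. -/
def gammaMap (p q : ℕ) (C : ∀ n : ℕ, Set ((Fin n → ZMod q) → ZMod p)) :
    ∀ n : ℕ, Set ((Fin n → ZMod p × ZMod q) → ZMod p × ZMod q) :=
  fun n => {f | ∃ g ∈ C n, ∃ (a : Fin n → ZMod p) (b : Fin n → ZMod q),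
    ∀ x : Fin n → ZMod p × ZMod q,
      f x = ((∑ i, a i * (x i).1) + g (fun i => (x i).2), ∑ i, b i * (x i).2)}

theorem gamma_well_defined (p q : ℕ) (hp : p.Prime) (hq : q.Prime) (hpq : p ≠ q)
    (C : ∀ n : ℕ, Set ((Fin n → ZMod q) → ZMod p))
    (hC : IsLinClosedClonoid p q C) :
    IsClone (gammaMap p q C) ∧
      (fun x : Fin 2 → ZMod p × ZMod q => x 0 + x 1) ∈ gammaMap p q C 2 := by
  obtain ⟨⟨n₀, f₀, hf₀⟩, hlin, hmat⟩ := hC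
  -- the zero function is in every C n
  have hzero : ∀ n, (fun _ : Fin n → ZMod q => (0 : ZMod p)) ∈ C n := by
    intro n
    have h1 := hlin n₀ 0 0 f₀ f₀ hf₀ hf₀
    have h0 : (fun _ : Fin n₀ → ZMod q => (0 : ZMod p)) ∈ C n₀ := by
      convert h1 using 1; funext x; ring
    have h2 := hmat n₀ n _ 0 h0
    simpa using h2
  have hadd : ∀ (n : ℕ) (f g : (Fin n → ZMod q) → ZMod p), f ∈ C n → g ∈ C n →
      (fun x => f x + g x) ∈ C n := by
    intro n f g hf hg
    have := hlin n 1 1 f g hf hg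
    simpa using this
  have hsum : ∀ (m k : ℕ) (a : Fin k → ZMod p) (h : Fin k → (Fin m → ZMod q) → ZMod p),
      (∀ i, h i ∈ C m) → (fun x => ∑ i, a i * h i x) ∈ C m := by
    intro m k
    induction k with
    | zero => intro a h _; simpa using hzero m
    | succ k ih =>
      intro a h hh
      have := hlin m (a 0) 1 (h 0) (fun x => ∑ i : Fin k, a i.succ * h i.succ x)
        (hh 0) (ih (fun i => a i.succ) (fun i => h i.succ) (fun i => hh i.succ))
      convert this using 1
      funext x
      simp [Fin.sum_univ_succ]
  constructor
  · constructor
    · -- projections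
      intro n i
      refine ⟨_, hzero n, (fun j => if j = i then 1 else 0), (fun j => if j = i then 1 else 0),
        fun x => ?_⟩
      simp [ite_mul, Finset.sum_ite_eq']
    · -- composition
      intro n m f g hf hg
      obtain ⟨gf, hgf, a, b, hfeq⟩ := hf
      choose h hh A B hg using hg
      refine ⟨fun y => (∑ i, a i * h i y) + gf (fun i => ∑ j, B i j * y j),
        hadd m _ _ (hsum m n a h hh) (hmat n m gf B hgf),
        (fun j => ∑ i, a i * A i j), (fun j => ∑ i, b i * B i j), fun x => ?_⟩
      simp only [hfeq, hg]
      refine Prod.ext ?_ ?_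
      · simp only [mul_add, Finset.sum_add_distrib, Finset.mul_sum, Finset.sum_mul]
        rw [Finset.sum_comm]
        ring_nf
      · simp only [Finset.mul_sum, Finset.sum_mul]
        rw [Finset.sum_comm]
        refine Finset.sum_congr rfl fun i _ => Finset.sum_congr rfl fun j _ => by ring
  · -- addition
    refine ⟨_, hzero 2, (fun _ => 1), (fun _ => 1), fun x => ?_⟩
    simp [Fin.sum_univ_two, Prod.ext_iff]
end

section
/- Let p, q be distinct primes. The map γ from the lattice of all (ZMod p, ZMod q)-linearly closed clonoids to the lattice of clones on ZMod p × ZMod q containing addition, defined by γ(C) = {f : f(x,y) = (⟨a,x⟩ + g(y), ⟨b,y⟩) for some g ∈ C, a, b}, is injective and preserves binary meets (intersections): γ(C ∩ D) = γ(C) ∩ γ(D). -/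
/-- Two representations of the same operation have the same `g` part. -/
lemma gamma_g_unique {p q n : ℕ} (f : (Fin n → ZMod p × ZMod q) → ZMod p × ZMod q)
    (g g' : (Fin n → ZMod q) → ZMod p) (a a' : Fin n → ZMod p) (b b' : Fin n → ZMod q)
    (h : ∀ x : Fin n → ZMod p × ZMod q,
      f x = ((∑ i, a i * (x i).1) + g (fun i => (x i).2), ∑ i, b i * (x i).2))
    (h' : ∀ x : Fin n → ZMod p × ZMod q,
      f x = ((∑ i, a' i * (x i).1) + g' (fun i => (x i).2), ∑ i, b' i * (x i).2)) :
    g = g' := by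
  funext y
  have h1 := h (fun i => ((0 : ZMod p), y i))
  have h2 := h' (fun i => ((0 : ZMod p), y i))
  rw [h1] at h2
  have := congrArg Prod.fst h2
  simpa using this

lemma gamma_mem_of_eq {p q : ℕ} (C D : ∀ n : ℕ, Set ((Fin n → ZMod q) → ZMod p))
    (h : gammaMap p q C = gammaMap p q D) {n : ℕ} {g : (Fin n → ZMod q) → ZMod p}
    (hg : g ∈ C n) : g ∈ D n := by
  have hf : (fun x : Fin n → ZMod p × ZMod q => (g (fun i => (x i).2),
      ∑ i, (0 : ZMod q) * (x i).2)) ∈ gammaMap p q C n := by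
    exact ⟨g, hg, 0, 0, fun x => by simp⟩
  rw [h] at hf
  obtain ⟨g', hg', a', b', hx⟩ := hf
  have : g = g' :=
    gamma_g_unique _ g g' 0 a' 0 b' (fun x => by simp) hx
  rwa [this]

theorem gamma_injective_and_meet_preserving (p q : ℕ) (hp : p.Prime) (hq : q.Prime)
    (hpq : p ≠ q) :
    (∀ C D : ∀ n : ℕ, Set ((Fin n → ZMod q) → ZMod p),
      IsLinClosedClonoid p q C → IsLinClosedClonoid p q D →
      gammaMap p q C = gammaMap p q D → C = D) ∧
    (∀ C D : ∀ n : ℕ, Set ((Fin n → ZMod q) → ZMod p),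
      IsLinClosedClonoid p q C → IsLinClosedClonoid p q D →
      gammaMap p q (fun n => C n ∩ D n) =
        fun n => gammaMap p q C n ∩ gammaMap p q D n) := by
  constructor
  · intro C D _ _ h
    funext n
    ext g
    exact ⟨fun hg => gamma_mem_of_eq C D h hg, fun hg => gamma_mem_of_eq D C h.symm hg⟩
  · intro C D _ _
    funext n
    ext f
    constructor
    · rintro ⟨g, ⟨hgC, hgD⟩, a, b, hx⟩
      exact ⟨⟨g, hgC, a, b, hx⟩, ⟨g, hgD, a, b, hx⟩⟩
    · rintro ⟨⟨g, hgC, a, b, hx⟩, ⟨g', hgD, a', b', hx'⟩⟩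
      have : g = g' := gamma_g_unique f g g' a a' b b' hx hx'
      exact ⟨g, ⟨hgC, this ▸ hgD⟩, a, b, hx⟩
end

section
/- Let p be a prime, R = (ZMod p)^A for a finite set A (a commutative ring), and consider multivariate polynomials over R with all variable exponents at most p−1. If f is such a polynomial, d = max total degree of f, and m is a monomial of f with nonzero coefficient r ∈ R and total degree d > 0, then the monomial r·x₁⋯x_d lies in the R-polynomial linearly closed clonoid generated by f; if d = 0 then the constant r lies in it. -/
/-!
Over `ZMod p`, the substitutions `x_l ↦ a • x_l` (`a ∈ ZMod p`) act on a monomial by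
`a ^ (x_l-degree)`. Since all exponents are `< p`, inverting the Vandermonde matrix of the `p`
points of `ZMod p` turns linear combinations of these substitutions into the projection onto the
monomials of a given `x_l`-degree; iterating these projections isolates every monomial `r • x^m`
of `f` inside the clonoid. Substituting `x_l + x_t` for `x_l` (with `x_t` fresh) and projecting
onto `x_l`-degree one replaces `x_l ^ k` by `k • x_l x_t ^ (k - 1)`, and `k` is invertible mod `p`;
repeating this makes the monomial multilinear of the same total degree, and renaming its
variables (the clonoid is closed under all renamings) moves it to `x_0 ⋯ x_(d-1)`.
-/

/-- An `R`-polynomial linearly closed clonoid, for `R = (ZMod p)^A`: a nonempty set of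
multivariate polynomials over `R` closed under `ZMod p`-linear combinations and under
substituting a `ZMod p`-linear combination of variables for a variable. -/
def IsRPolyLinClosedClonoid (p : ℕ) (A : Type*)
    (C : Set (MvPolynomial ℕ (A → ZMod p))) : Prop :=
  C.Nonempty ∧
  (∀ (a b : ZMod p) (f g : MvPolynomial ℕ (A → ZMod p)),
    f ∈ C → g ∈ C → a • f + b • g ∈ C) ∧
  (∀ (f : MvPolynomial ℕ (A → ZMod p)) (l s : ℕ) (a : Fin s → ZMod p), f ∈ C →
    MvPolynomial.bind₁
      (fun j => if j = l then ∑ i : Fin s, a i • MvPolynomial.X (i : ℕ)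
                else MvPolynomial.X j) f ∈ C)

open MvPolynomial

namespace MvPolynomial

variable {σ R : Type*} [CommSemiring R]

theorem rename_congr_of_vars {τ : Type*} {f g : σ → τ} {φ : MvPolynomial σ R}
    (h : ∀ i ∈ φ.vars, f i = g i) : rename f φ = rename g φ :=
  hom_congr_vars (f₁ := (rename f).toRingHom) (f₂ := (rename g).toRingHom) (by ext; simp)
    (fun i hi _ => by simp [h i hi]) rfl

variable [DecidableEq σ]

noncomputable def substVar (l : σ) (q : MvPolynomial σ R) :
    MvPolynomial σ R →ₐ[R] MvPolynomial σ R :=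
  bind₁ fun j => if j = l then q else X j

theorem substVar_monomial (l : σ) (q : MvPolynomial σ R) (μ : σ →₀ ℕ) (r : R) :
    substVar l q (monomial μ r) = monomial (μ.erase l) r * q ^ μ l := by
  have hfix : substVar l q (monomial (μ.erase l) r) = monomial (μ.erase l) r := by
    rw [substVar, bind₁_monomial, monomial_eq, Finsupp.prod]
    congr 1
    refine Finset.prod_congr rfl fun i hi => ?_
    rw [Finsupp.support_erase] at hi
    rw [if_neg (Finset.ne_of_mem_erase hi)]
  conv_lhs => rw [← Finsupp.erase_add_single l μ, monomial_add_single]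
  rw [map_mul, map_pow, hfix, substVar, bind₁_X_right, if_pos rfl]

theorem substVar_X_eq_rename (l t : σ) :
    substVar l (X t : MvPolynomial σ R) = rename (Function.update id l t) := by
  ext j : 1
  simp [substVar, Function.update_apply, apply_ite X]

theorem substVar_add_X_monomial (l t : σ) (μ : σ →₀ ℕ) (r : R) :
    substVar l (X l + X t) (monomial μ r) =
      ∑ j ∈ Finset.range (μ l + 1), (μ l).choose j •
        monomial (μ.erase l + Finsupp.single l j + Finsupp.single t (μ l - j)) r := by
  rw [substVar_monomial, add_pow, Finset.mul_sum]
  refine Finset.sum_congr rfl fun j _ => ?_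
  rw [monomial_add_single, monomial_add_single, nsmul_eq_mul]
  ring

variable {K : Type*} [Field K] [Algebra K R] {n : ℕ}

theorem substVar_smul_X_monomial (l : σ) (a : K) (μ : σ →₀ ℕ) (r : R) :
    substVar l (a • X l) (monomial μ r) = a ^ μ l • monomial μ r := by
  rw [substVar_monomial, smul_pow, mul_smul_comm, ← monomial_add_single, Finsupp.erase_add_single]

theorem inv_vandermonde_mul_pow {v : Fin n → K} (hv : Function.Injective v) (k j : Fin n) :
    ∑ i, (Matrix.vandermonde v)⁻¹ k i * v i ^ (j : ℕ) = if k = j then 1 else 0 := by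
  have hunit : IsUnit (Matrix.vandermonde v).det :=
    isUnit_iff_ne_zero.2 (Matrix.det_vandermonde_ne_zero_iff.2 hv)
  simpa [Matrix.mul_apply, Matrix.one_apply] using
    congrFun (congrFun (Matrix.nonsing_inv_mul _ hunit) k) j

/-- For injective `v`, the projection onto the monomials of `x_l`-degree `k`, on polynomials
whose `x_l`-degrees are all `< n`. -/
noncomputable def degProj (v : Fin n → K) (l : σ) (k : Fin n) :
    MvPolynomial σ R →ₗ[K] MvPolynomial σ R :=
  ∑ i, (Matrix.vandermonde v)⁻¹ k i • (substVar l (v i • X l)).toLinearMap.restrictScalars K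

theorem degProj_apply (v : Fin n → K) (l : σ) (k : Fin n) (f : MvPolynomial σ R) :
    degProj v l k f = ∑ i, (Matrix.vandermonde v)⁻¹ k i • substVar l (v i • X l) f := by
  simp [degProj]

theorem degProj_monomial {v : Fin n → K} (hv : Function.Injective v) (l : σ) (k : Fin n)
    {μ : σ →₀ ℕ} (hμ : μ l < n) (r : R) :
    degProj v l k (monomial μ r) = if μ l = k then monomial μ r else 0 := by
  simp_rw [degProj_apply, substVar_smul_X_monomial, smul_smul, ← Finset.sum_smul]
  rw [inv_vandermonde_mul_pow hv k ⟨μ l, hμ⟩]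
  by_cases h : μ l = k
  · rw [if_pos (Fin.ext h.symm), if_pos h, one_smul]
  · rw [if_neg (fun hk => h (congrArg Fin.val hk).symm), if_neg h, zero_smul]

theorem coeff_degProj {v : Fin n → K} (hv : Function.Injective v) (l : σ) (k : Fin n)
    {f : MvPolynomial σ R} (hf : ∀ μ ∈ f.support, μ l < n) (ν : σ →₀ ℕ) :
    (degProj v l k f).coeff ν = if ν l = k then f.coeff ν else 0 := by
  conv_lhs => rw [← support_sum_monomial_coeff f]
  rw [map_sum, Finset.sum_congr rfl fun μ hμ => degProj_monomial hv l k (hf μ hμ) _]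
  simp only [coeff_sum, apply_ite (coeff ν), coeff_monomial, coeff_zero]
  rw [Finset.sum_eq_single ν (fun μ _ hμ => by simp [hμ]) (fun hν => by
    simp [notMem_support_iff.1 hν])]
  simp

theorem degProj_substVar_add_X_monomial {v : Fin n → K} (hv : Function.Injective v) {l t : σ}
    (hlt : l ≠ t) {μ : σ →₀ ℕ} (hμ : μ l < n) (r : R) {j : Fin n} (hj : (j : ℕ) ≤ μ l) :
    degProj v l j (substVar l (X l + X t) (monomial μ r)) = (μ l).choose j •
      monomial (μ.erase l + Finsupp.single l (j : ℕ) + Finsupp.single t (μ l - j)) r := by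
  have hdeg : ∀ i, (μ.erase l + Finsupp.single l i + Finsupp.single t (μ l - i)) l = i := by
    simp [hlt.symm]
  rw [substVar_add_X_monomial, map_sum]
  simp_rw [map_nsmul]
  rw [Finset.sum_congr rfl fun i hi => by
    rw [degProj_monomial hv l j (by rw [hdeg]; have := Finset.mem_range.1 hi; omega), hdeg]]
  simp_rw [smul_ite, smul_zero]
  rw [Finset.sum_ite_eq' (Finset.range (μ l + 1)) (j : ℕ), if_pos (Finset.mem_range.2 (by omega))]

end MvPolynomial

namespace Finsupp

variable {σ : Type*}

theorem card_support_le_degree (μ : σ →₀ ℕ) : μ.support.card ≤ μ.degree := by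
  rw [Finset.card_eq_sum_ones, degree_apply]
  exact Finset.sum_le_sum fun i hi => Nat.one_le_iff_ne_zero.2 (mem_support_iff.1 hi)

theorem sum_support_single_one {μ : σ →₀ ℕ} (hμ : ∀ i, μ i ≤ 1) :
    ∑ i ∈ μ.support, single i 1 = μ := by
  conv_rhs => rw [← sum_single μ]
  refine Finset.sum_congr rfl fun i hi => ?_
  rw [show μ i = 1 by have := mem_support_iff.1 hi; have := hμ i; omega]

theorem degree_sum_single_one (S : Finset σ) : (∑ i ∈ S, single i 1).degree = S.card := by
  simp [map_sum, degree_single]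

end Finsupp

namespace IsRPolyLinClosedClonoid

variable {p : ℕ} {A : Type*} {C : Set (MvPolynomial ℕ (A → ZMod p))}
  {f : MvPolynomial ℕ (A → ZMod p)}

def toSubmodule (hC : IsRPolyLinClosedClonoid p A C) :
    Submodule (ZMod p) (MvPolynomial ℕ (A → ZMod p)) where
  carrier := C
  add_mem' {f g} hf hg := by simpa using hC.2.1 1 1 f g hf hg
  zero_mem' := by
    obtain ⟨f, hf⟩ := hC.1
    simpa using hC.2.1 0 0 f f hf hf
  smul_mem' a f hf := by simpa using hC.2.1 a 0 f f hf hf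

theorem substVar_mem (hC : IsRPolyLinClosedClonoid p A C) (hf : f ∈ C) (l : ℕ)
    {q : MvPolynomial ℕ (A → ZMod p)} (hq : q ∈ Submodule.span (ZMod p) (Set.range X)) :
    substVar l q f ∈ C := by
  obtain ⟨c, rfl⟩ := Finsupp.mem_span_range_iff_exists_finsupp.1 hq
  obtain ⟨s, hs⟩ := c.support.exists_nat_subset_range
  have hsum : (c.sum fun i a => a • X i) =
      ∑ i : Fin s, c i • (X i : MvPolynomial ℕ (A → ZMod p)) := by
    rw [Fin.sum_univ_eq_sum_range (fun i => c i • (X i : MvPolynomial ℕ (A → ZMod p)))]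
    exact Finsupp.sum_of_support_subset c hs _ fun i _ => zero_smul _ _
  rw [hsum]
  exact hC.2.2 f l s (fun i => c i) hf

-- Send `a` to `σ a` first: that target lies outside `s`, so later steps never move it again.
theorem rename_mem_of_forall_notMem (hC : IsRPolyLinClosedClonoid p A C) (s : Finset ℕ) :
    ∀ σ : ℕ → ℕ, (∀ i ∉ s, σ i = i) → (∀ i ∈ s, σ i ∉ s) → ∀ f ∈ C, rename σ f ∈ C := by
  induction s using Finset.induction_on with
  | empty =>
    intro σ hfix _ f hf
    rwa [show σ = id from funext fun i => hfix i (Finset.notMem_empty i), rename_id_apply]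
  | insert a s ha ih =>
    intro σ hfix hmaps f hf
    have hσa : σ a ∉ insert a s := hmaps a (Finset.mem_insert_self a s)
    have hcomp : σ = Function.update σ a a ∘ Function.update id a (σ a) := by
      funext i
      by_cases hi : i = a
      · have : σ a ≠ a := fun h => hσa (by rw [h]; exact Finset.mem_insert_self a s)
        simp [hi, this, hfix _ hσa]
      · simp [hi]
    rw [hcomp, ← rename_rename, ← substVar_X_eq_rename]
    refine ih _ (fun i hi => ?_) (fun i hi => ?_) _
      (hC.substVar_mem hf a (Submodule.subset_span ⟨σ a, rfl⟩))
    · by_cases hia : i = a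
      · simp [hia]
      · rw [Function.update_of_ne hia]
        exact hfix i (by simp [hia, hi])
    · have hia : i ≠ a := fun h => ha (h ▸ hi)
      rw [Function.update_of_ne hia]
      exact fun h => hmaps i (Finset.mem_insert_of_mem hi) (Finset.mem_insert_of_mem h)

-- Shift the variables of `f` past everything in sight, then move them to their images.
theorem rename_mem (hC : IsRPolyLinClosedClonoid p A C) (hf : f ∈ C) (σ : ℕ → ℕ) :
    rename σ f ∈ C := by
  obtain ⟨N, hN⟩ := (f.vars ∪ f.vars.image σ).exists_nat_subset_range
  have hlt : ∀ i ∈ f.vars, i < N ∧ σ i < N := fun i hi =>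
    ⟨Finset.mem_range.1 (hN (Finset.mem_union_left _ hi)),
      Finset.mem_range.1 (hN (Finset.mem_union_right _ (Finset.mem_image_of_mem σ hi)))⟩
  let shift : ℕ → ℕ := fun i => if i ∈ f.vars then i + N else i
  let back : ℕ → ℕ := fun j => if j ∈ f.vars.image (· + N) then σ (j - N) else j
  have hσ : rename σ f = rename back (rename shift f) := by
    rw [rename_rename]
    exact rename_congr_of_vars fun i hi => by simp [back, shift, hi]
  rw [hσ]
  refine hC.rename_mem_of_forall_notMem _ back (fun j hj => if_neg hj) ?_ _
    (hC.rename_mem_of_forall_notMem _ shift (fun i hi => if_neg hi) ?_ f hf)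
  · intro _ hj
    obtain ⟨i, hi, rfl⟩ := Finset.mem_image.1 hj
    have hback : back (i + N) = σ i := by simp only [back, if_pos hj, add_tsub_cancel_right]
    rw [hback, Finset.mem_image]
    rintro ⟨k, _, hk⟩
    have := (hlt i hi).2
    omega
  · intro i hi hmem
    simp only [hi, if_true, shift] at hmem
    have := (hlt _ hmem).1
    omega

theorem monomial_sum_range_mem (hC : IsRPolyLinClosedClonoid p A C) {S : Finset ℕ}
    {r : A → ZMod p} (h : monomial (∑ i ∈ S, Finsupp.single i 1) r ∈ C) :
    monomial (∑ i ∈ Finset.range S.card, Finsupp.single i 1) r ∈ C := by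
  let σ : ℕ → ℕ := fun i => if hi : i ∈ S then S.equivFin ⟨i, hi⟩ else i
  have hmap : Finsupp.mapDomain σ (∑ i ∈ S, Finsupp.single i 1) =
      ∑ i ∈ Finset.range S.card, Finsupp.single i 1 := by
    simp_rw [Finsupp.mapDomain_finsetSum, Finsupp.mapDomain_single]
    calc ∑ i ∈ S, Finsupp.single (σ i) 1 = ∑ i : S, Finsupp.single (σ i) 1 :=
          (Finset.sum_coe_sort S _).symm
      _ = ∑ i : S, Finsupp.single (S.equivFin i : ℕ) 1 :=
          Finset.sum_congr rfl fun i _ => by simp [σ, i.2]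
      _ = ∑ j : Fin S.card, Finsupp.single (j : ℕ) 1 :=
          S.equivFin.sum_comp fun j => Finsupp.single (j : ℕ) 1
      _ = _ := Fin.sum_univ_eq_sum_range (fun j => Finsupp.single j 1) _
  simpa [rename_monomial, hmap] using hC.rename_mem h σ

variable [Fact p.Prime]

theorem degProj_mem (hC : IsRPolyLinClosedClonoid p A C) (hf : f ∈ C) {n : ℕ}
    (v : Fin n → ZMod p) (l : ℕ) (k : Fin n) : degProj v l k f ∈ C := by
  rw [degProj_apply]
  exact hC.toSubmodule.sum_mem fun i _ => hC.toSubmodule.smul_mem _ <|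
    hC.substVar_mem hf l (Submodule.smul_mem _ _ (Submodule.subset_span ⟨l, rfl⟩))

theorem monomial_coeff_mem (hC : IsRPolyLinClosedClonoid p A C) (hf : f ∈ C)
    (hexp : ∀ μ ∈ f.support, ∀ i, μ i < p) {m : ℕ →₀ ℕ} (hm : m ∈ f.support) :
    monomial m (f.coeff m) ∈ C := by
  induction hN : f.support.card using Nat.strong_induction_on generalizing f with
  | _ N ih =>
  by_cases hsub : f.support ⊆ {m}
  · have hsupp : f.support = {m} :=
      Finset.Subset.antisymm hsub (Finset.singleton_subset_iff.2 hm)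
    rwa [← Finset.sum_singleton (fun μ => monomial μ (f.coeff μ)) m, ← hsupp,
      support_sum_monomial_coeff]
  obtain ⟨m', hm', hne⟩ := Finset.not_subset.1 hsub
  obtain ⟨l, hl⟩ : ∃ l, m' l ≠ m l := by
    by_contra! h
    exact hne (Finset.mem_singleton.2 (Finsupp.ext h))
  -- projecting onto the monomials of `x_l`-degree `m l` keeps `m` and drops `m'`
  set g := degProj (ZMod.finEquiv p) l ⟨m l, hexp m hm l⟩ f
  have hg : ∀ ν, g.coeff ν = if ν l = m l then f.coeff ν else 0 :=
    coeff_degProj (ZMod.finEquiv p).injective l _ fun μ hμ => hexp μ hμ l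
  have hsupp : g.support ⊆ f.support.erase m' := by
    intro ν hν
    rw [mem_support_iff, hg] at hν
    split_ifs at hν with h
    · exact Finset.mem_erase.2 ⟨fun h' => hl (h' ▸ h), mem_support_iff.2 hν⟩
    · exact absurd rfl hν
  have hgm : g.coeff m = f.coeff m := by rw [hg, if_pos rfl]
  rw [← hgm]
  refine ih _ ?_ (hC.degProj_mem hf _ l _)
    (fun μ hμ => hexp μ (Finset.mem_of_mem_erase (hsupp hμ)))
    (by rw [mem_support_iff, hgm]; exact mem_support_iff.1 hm) rfl
  calc g.support.card ≤ (f.support.erase m').card := Finset.card_le_card hsupp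
    _ < N := hN ▸ Finset.card_erase_lt_of_mem hm'

theorem monomial_split_mem (hC : IsRPolyLinClosedClonoid p A C) {μ : ℕ →₀ ℕ} {r : A → ZMod p}
    (h : monomial μ r ∈ C) {l t : ℕ} (hlt : l ≠ t) (hl : 0 < μ l) (hlp : μ l < p) :
    monomial (μ.erase l + Finsupp.single l 1 + Finsupp.single t (μ l - 1)) r ∈ C := by
  have h1 : 1 < p := (Fact.out : p.Prime).one_lt
  have hsplit := hC.degProj_mem (hC.substVar_mem h l (Submodule.add_mem _
    (Submodule.subset_span ⟨l, rfl⟩) (Submodule.subset_span ⟨t, rfl⟩))) (ZMod.finEquiv p) l ⟨1, h1⟩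
  rw [degProj_substVar_add_X_monomial (ZMod.finEquiv p).injective hlt hlp r (j := ⟨1, h1⟩) hl,
    Nat.choose_one_right, ← Nat.cast_smul_eq_nsmul (ZMod p)] at hsplit
  have hk : (μ l : ZMod p) ≠ 0 :=
    (ZMod.natCast_eq_zero_iff _ _).not.2 (Nat.not_dvd_of_pos_of_lt hl hlp)
  have := hC.toSubmodule.smul_mem (μ l : ZMod p)⁻¹ hsplit
  rwa [smul_smul, inv_mul_cancel₀ hk, one_smul] at this

-- Each split keeps the degree and enlarges the support, so `degree - #support` decreases.
theorem exists_finset_monomial_mem (hC : IsRPolyLinClosedClonoid p A C) {r : A → ZMod p}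
    {μ : ℕ →₀ ℕ} (hμ : ∀ i, μ i < p) (h : monomial μ r ∈ C) :
    ∃ S : Finset ℕ, S.card = μ.degree ∧ monomial (∑ i ∈ S, Finsupp.single i 1) r ∈ C := by
  induction hN : μ.degree - μ.support.card using Nat.strong_induction_on generalizing μ with
  | _ N ih =>
  by_cases hlin : ∀ i, μ i ≤ 1
  · refine ⟨μ.support, ?_, by rwa [Finsupp.sum_support_single_one hlin]⟩
    conv_rhs => rw [← Finsupp.sum_support_single_one hlin]
    exact (Finsupp.degree_sum_single_one _).symm
  push Not at hlin
  obtain ⟨l, hl⟩ := hlin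
  obtain ⟨t, ht⟩ := Infinite.exists_notMem_finset μ.support
  have hμt : μ t = 0 := Finsupp.notMem_support_iff.1 ht
  have hlt : l ≠ t := by rintro rfl; omega
  set ν := μ.erase l + Finsupp.single l 1 + Finsupp.single t (μ l - 1) with hν
  have hνapp : ∀ i, ν i = if i = l then 1 else if i = t then μ l - 1 else μ i := by
    intro i
    simp only [hν, Finsupp.add_apply, Finsupp.erase_apply, Finsupp.single_apply]
    split_ifs <;> subst_vars <;> omega
  have hdeg : ν.degree = μ.degree := by
    have := congrArg Finsupp.degree (Finsupp.erase_add_single l μ)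
    simp only [hν, map_add, Finsupp.degree_single] at this ⊢
    omega
  have hsupp : μ.support ⊂ ν.support := by
    refine (Finset.ssubset_iff_of_subset fun i hi => ?_).2 ⟨t, ?_, ht⟩
    · rw [Finsupp.mem_support_iff] at hi ⊢
      rw [hνapp]
      split_ifs <;> omega
    · rw [Finsupp.mem_support_iff, hνapp, if_neg hlt.symm, if_pos rfl]
      omega
  obtain ⟨S, hS, hSmem⟩ := ih (ν.degree - ν.support.card)
    (by have := Finset.card_lt_card hsupp; have := ν.card_support_le_degree; omega)
    (fun i => by have := hμ i; have := hμ l; rw [hνapp]; split_ifs <;> omega)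
    (hC.monomial_split_mem h hlt (by omega) (hμ l)) rfl
  exact ⟨S, hS.trans hdeg, hSmem⟩

end IsRPolyLinClosedClonoid

theorem top_degree_monomial_in_clonoid_general (p : ℕ) (hp : p.Prime) (A : Type*)
    (f : MvPolynomial ℕ (A → ZMod p))
    (hexp : ∀ m ∈ f.support, ∀ i, m i ≤ p - 1)
    (m : ℕ →₀ ℕ) (hm : m ∈ f.support)
    (hdeg : (m.sum fun _ e => e) = f.totalDegree) :
    ∀ C, IsRPolyLinClosedClonoid p A C → f ∈ C →
      (f.totalDegree = 0 → MvPolynomial.C (f.coeff m) ∈ C) ∧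
      (0 < f.totalDegree →
        MvPolynomial.monomial (∑ i ∈ Finset.range f.totalDegree, Finsupp.single i 1)
          (f.coeff m) ∈ C) := by
  intro C hC hf
  have := Fact.mk hp
  have hlt : ∀ μ ∈ f.support, ∀ i, μ i < p := fun μ hμ i => by
    have := hexp μ hμ i; have := hp.pos; omega
  obtain ⟨S, hS, hSmem⟩ :=
    hC.exists_finset_monomial_mem (hlt m hm) (hC.monomial_coeff_mem hf hlt hm)
  have hmem := hC.monomial_sum_range_mem hSmem
  rw [hS] at hmem
  change monomial (∑ i ∈ Finset.range (m.sum fun _ e => e), _) _ ∈ C at hmem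
  rw [hdeg] at hmem
  exact ⟨fun h0 => by simpa [h0] using hmem, fun _ => hmem⟩

theorem top_degree_monomial_in_clonoid (p : ℕ) (hp : p.Prime) (A : Type*) [Fintype A]
    (f : MvPolynomial ℕ (A → ZMod p))
    (hexp : ∀ m ∈ f.support, ∀ i, m i ≤ p - 1)
    (m : ℕ →₀ ℕ) (hm : m ∈ f.support)
    (hdeg : (m.sum fun _ e => e) = f.totalDegree) :
    ∀ C, IsRPolyLinClosedClonoid p A C → f ∈ C →
      (f.totalDegree = 0 → MvPolynomial.C (f.coeff m) ∈ C) ∧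
      (0 < f.totalDegree →
        MvPolynomial.monomial (∑ i ∈ Finset.range f.totalDegree, Finsupp.single i 1)
          (f.coeff m) ∈ C) :=
  top_degree_monomial_in_clonoid_general p hp A f hexp m hm hdeg
end

section
/- Let p, q be distinct primes, d ≥ 2 a natural number, r : (ZMod q)^l → ZMod p a function, and m ∈ ({0,...,p−1})^k \ {0} an exponent vector whose total degree u is congruent to d modulo p−1. Then the induced function of the monomial r·x^m (the function ((ZMod p)^s × (ZMod q)^s) → ZMod p × ZMod q given by (x,y) ↦ (r(y₁,...,y_l)·x^m, 0)) lies in the clone generated by the induced function of r·x₁⋯x_d together with the linear operations of ZMod p × ZMod q. -/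
open Finset

theorem ZMod.pow_add_mul_card_sub_one {p : ℕ} [Fact p.Prime] (z : ZMod p) {a : ℕ} (ha : a ≠ 0)
    (t : ℕ) : z ^ (a + (p - 1) * t) = z ^ a := by
  rcases eq_or_ne z 0 with rfl | hz
  · simp [ha]
  · rw [pow_add, pow_mul, ZMod.pow_card_sub_one_eq_one hz, one_pow, mul_one]

theorem ZMod.prod_pow_mul_pow_mul_card_sub_one {p k : ℕ} [Fact p.Prime] (z : Fin k → ZMod p)
    (m : Fin k → ℕ) {i₀ : Fin k} (hi₀ : m i₀ ≠ 0) (t : ℕ) :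
    (∏ i, z i ^ m i) * z i₀ ^ ((p - 1) * t) = ∏ i, z i ^ m i := by
  rw [← mul_prod_erase univ _ (mem_univ i₀), mul_right_comm, ← pow_add,
    ZMod.pow_add_mul_card_sub_one _ hi₀]

theorem exists_prod_comp_eq_prod_pow {ι M : Type*} [Fintype ι] [CommMonoid M] (n : ι → ℕ) :
    ∃ c : Fin (∑ i, n i) → ι, ∀ g : ι → M, ∏ j, g (c j) = ∏ i, g i ^ n i := by
  let e : (Σ i, Fin (n i)) ≃ Fin (∑ i, n i) := Fintype.equivFinOfCardEq (by simp)
  refine ⟨fun j => (e.symm j).1, fun g => ?_⟩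
  rw [e.symm.prod_comp (fun x => g x.1), Fintype.prod_sigma]
  simp

theorem Nat.exists_mul_one_add_mul_add_one_eq {n u e : ℕ} (hn : 0 < n) (he : 0 < e)
    (hu : u ≡ e + 1 [MOD n]) : ∃ t, e * (1 + n * u) + 1 = u + n * t := by
  have hu_le : u ≤ n * (e * u) := by
    calc u = 1 * (1 * u) := by ring
      _ ≤ n * (e * u) := by gcongr <;> assumption
  rw [show e * (1 + n * u) + 1 = e + 1 + n * (e * u) by ring]
  have hb : e + 1 ≡ e + 1 + n * (e * u) [MOD n] := (Nat.add_mul_mod_self_left _ _ _).symm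
  obtain ⟨t, ht⟩ := (Nat.modEq_iff_dvd' (by omega)).mp (hu.trans hb)
  exact ⟨t, by omega⟩

theorem pow_mul_prod_mem_of_mul_prod_mem {M ι : Type*} [CommMonoid M] {S : Set M} {R : M}
    {v : ι → M} {e : ℕ} (hv : ∀ i, v i ∈ S)
    (hS : ∀ f : Fin (e + 1) → M, (∀ i, f i ∈ S) → R * ∏ i, f i ∈ S) (a : ℕ) {N : ℕ}
    (hN : N = e * a + 1) (c : Fin N → ι) : R ^ a * ∏ j, v (c j) ∈ S := by
  induction a generalizing N with
  | zero =>
    obtain rfl : N = 1 := by simpa using hN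
    simpa using hv (c 0)
  | succ a ih =>
    obtain rfl : N = (e * a + 1) + e := by rw [hN]; ring
    have hhead := ih rfl fun j => c (Fin.castAdd e j)
    have hstep := hS (Fin.cons _ fun i => v (c (Fin.natAdd _ i)))
      (Fin.cases hhead fun i => hv _)
    rw [Fin.prod_cons] at hstep
    rwa [Fin.prod_univ_add, pow_succ', mul_assoc, ← mul_assoc (R ^ a)]

section ProdClone

variable {K L : Type*} [CommSemiring K] [Semiring L]

def ContainsLinearOps (C : ∀ n : ℕ, Set ((Fin n → K × L) → K × L)) : Prop :=
  ∀ (n : ℕ) (a : Fin n → K) (b : Fin n → L),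
    (fun x : Fin n → K × L => ((∑ i, a i * (x i).1, ∑ i, b i * (x i).2) : K × L)) ∈ C n

def fstFunctions (C : ∀ n : ℕ, Set ((Fin n → K × L) → K × L)) (n : ℕ) :
    Set ((Fin n → K × L) → K) :=
  {F | (fun x => (F x, 0)) ∈ C n}

variable {C : ∀ n : ℕ, Set ((Fin n → K × L) → K × L)}

theorem fst_mem_fstFunctions (hlin : ContainsLinearOps C) {n : ℕ} (j : Fin n) :
    (fun x => (x j).1) ∈ fstFunctions C n := by
  simpa [fstFunctions, ite_mul, sum_ite_eq'] using
    hlin n (fun i => if i = j then 1 else 0) 0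

theorem mk_snd_mem_of_mem_fstFunctions (hC : IsClone C) (hlin : ContainsLinearOps C) {n : ℕ}
    {F : (Fin n → K × L) → K} (hF : F ∈ fstFunctions C n) (j : Fin n) :
    (fun x => (F x, (x j).2)) ∈ C n := by
  simpa [Fin.sum_univ_two] using
    hC.2 2 n _ ![fun x => (F x, 0), fun x => x j] (hlin 2 ![1, 0] ![0, 1])
      (Fin.forall_fin_two.2 ⟨hF, hC.1 n j⟩)

theorem mul_prod_mem_fstFunctions (hC : IsClone C) (hlin : ContainsLinearOps C)
    {l d s : ℕ} (hl : l ≤ s) (hds : d ≤ s) {r : (Fin l → L) → K}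
    (hgen : (fun x : Fin s → K × L =>
        ((r (fun i => (x (Fin.castLE hl i)).2) * ∏ i : Fin d, (x (Fin.castLE hds i)).1, 0)
          : K × L)) ∈ C s)
    (F : Fin d → (Fin s → K × L) → K) (hF : ∀ i, F i ∈ fstFunctions C s) :
    (fun x => r (fun i => (x (Fin.castLE hl i)).2)) * ∏ i, F i ∈ fstFunctions C s := by
  let G (j : Fin s) : (Fin s → K × L) → K :=
    if h : (j : ℕ) < d then F ⟨j, h⟩ else fun x => (x j).1
  have hG (j : Fin s) : G j ∈ fstFunctions C s := by
    unfold G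
    split
    · exact hF _
    · exact fst_mem_fstFunctions hlin j
  rw [fstFunctions, Set.mem_ofPred_eq]
  convert hC.2 s s _ _ hgen fun j => mk_snd_mem_of_mem_fstFunctions hC hlin (hG j) j
    using 2 with x
  simp [G]

end ProdClone

theorem induced_monomial_generated_general (p q : ℕ) (hp : p.Prime)
    (d : ℕ) (hd2 : 2 ≤ d) (l k s : ℕ)
    (r : (Fin l → ZMod q) → ZMod p)
    (m : Fin k → ℕ) (hm0 : ∃ i, m i ≠ 0)
    (hu : (∑ i, m i) ≡ d [MOD p - 1])
    (hk : k ≤ s) (hl : l ≤ s) (hds : d ≤ s)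
    (C : ∀ n : ℕ, Set ((Fin n → ZMod p × ZMod q) → ZMod p × ZMod q))
    (hC : IsClone C)
    (hlin : ∀ (n : ℕ) (a : Fin n → ZMod p) (b : Fin n → ZMod q),
      (fun x : Fin n → ZMod p × ZMod q =>
        ((∑ i, a i * (x i).1, ∑ i, b i * (x i).2) : ZMod p × ZMod q)) ∈ C n)
    (hgen : (fun x : Fin s → ZMod p × ZMod q =>
        ((r (fun i => (x (Fin.castLE hl i)).2) * ∏ i : Fin d, (x (Fin.castLE hds i)).1, 0)
          : ZMod p × ZMod q)) ∈ C s) :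
    (fun x : Fin s → ZMod p × ZMod q =>
        ((r (fun i => (x (Fin.castLE hl i)).2) *
            ∏ i : Fin k, (x (Fin.castLE hk i)).1 ^ m i, 0) : ZMod p × ZMod q)) ∈ C s := by
  have : Fact p.Prime := ⟨hp⟩
  obtain ⟨e, rfl⟩ : ∃ e, d = e + 1 := ⟨d - 1, by omega⟩
  obtain ⟨i₀, hi₀⟩ := hm0
  obtain ⟨c, hc⟩ := exists_prod_comp_eq_prod_pow (M := ZMod p) m
  obtain ⟨t, ht⟩ :=
    Nat.exists_mul_one_add_mul_add_one_eq (Nat.sub_pos_of_lt hp.one_lt) (by omega) hu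
  have hword := pow_mul_prod_mem_of_mul_prod_mem (fun j => fst_mem_fstFunctions hlin j)
    (mul_prod_mem_fstFunctions hC hlin hl hds hgen) _ ht.symm
    (Fin.append (Fin.castLE hk ∘ c) fun _ => Fin.castLE hk i₀)
  rw [fstFunctions, Set.mem_ofPred_eq] at hword
  convert hword using 3 with x
  simp only [Pi.mul_apply, Pi.pow_apply, Finset.prod_apply, Fin.prod_univ_add, Fin.append_left,
    Fin.append_right, Function.comp_apply, Finset.prod_const, Finset.card_univ, Fintype.card_fin]
  rw [hc fun i => (x (Fin.castLE hk i)).1, ZMod.prod_pow_mul_pow_mul_card_sub_one _ _ hi₀,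
    ZMod.pow_add_mul_card_sub_one _ one_ne_zero, pow_one]

theorem induced_monomial_generated (p q : ℕ) (hp : p.Prime) (hq : q.Prime) (hpq : p ≠ q)
    (d : ℕ) (hd2 : 2 ≤ d) (l k s : ℕ)
    (r : (Fin l → ZMod q) → ZMod p)
    (m : Fin k → ℕ) (hmb : ∀ i, m i ≤ p - 1) (hm0 : ∃ i, m i ≠ 0)
    (hu : (∑ i, m i) ≡ d [MOD p - 1])
    (hk : k ≤ s) (hl : l ≤ s) (hds : d ≤ s)
    (C : ∀ n : ℕ, Set ((Fin n → ZMod p × ZMod q) → ZMod p × ZMod q))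
    (hC : IsClone C)
    (hlin : ∀ (n : ℕ) (a : Fin n → ZMod p) (b : Fin n → ZMod q),
      (fun x : Fin n → ZMod p × ZMod q =>
        ((∑ i, a i * (x i).1, ∑ i, b i * (x i).2) : ZMod p × ZMod q)) ∈ C n)
    (hgen : (fun x : Fin s → ZMod p × ZMod q =>
        ((r (fun i => (x (Fin.castLE hl i)).2) * ∏ i : Fin d, (x (Fin.castLE hds i)).1, 0)
          : ZMod p × ZMod q)) ∈ C s) :
    (fun x : Fin s → ZMod p × ZMod q =>
        ((r (fun i => (x (Fin.castLE hl i)).2) *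
            ∏ i : Fin k, (x (Fin.castLE hk i)).1 ^ m i, 0) : ZMod p × ZMod q)) ∈ C s :=
  induced_monomial_generated_general p q hp d hd2 l k s r m hm0 hu hk hl hds C hC hlin hgen
end

section
/- Let p and q be distinct primes and let f : (ZMod p)^n × (ZMod q)^n → ZMod p × ZMod q be a function preserving π₁. Then f preserves the commutator relation [π₁, π₁] = 0 (i.e., preserves ρ(π₁, π₁, 0)) if and only if there exist a function f_c : (ZMod p)^n → ZMod q, coefficients (a_m)_{m ∈ ({0,...,p−1})^n} ⊆ ZMod p, and a function f₁ : (ZMod p)^n → (ZMod q)^n such that f(x, y) = (∑_m a_m x^m, ⟨f₁(x), y⟩ + f_c(x)) for all (x, y). -/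
/-!
A quadruple of `ρ(π₁, π₁, 0)` is `(x, y₁), (x, y₂), (x, y₃), (x, y₁ - y₂ + y₃)` coordinatewise, so
preserving it means that for each `x` the map `y ↦ f (x, y)` preserves the Mal'cev term
`y₁ - y₂ + y₃`, i.e. is affine. Its second component is then additive up to a constant, hence
`ZMod q`-linear; its first component does not depend on `y`, and every function on `(ZMod p)ⁿ` is
a polynomial function with exponents below `p` (interpolation over a finite field).
-/

open MvPolynomial in
theorem MvPolynomial.eval_eq_sum_of_mem_restrictDegree {R σ : Type*} [CommSemiring R] [Fintype σ]
    [DecidableEq σ] {p : ℕ} (hp : 0 < p) {P : MvPolynomial σ R}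
    (hP : P ∈ restrictDegree σ R (p - 1)) (x : σ → R) :
    eval x P = ∑ m : σ → Fin p,
      P.coeff (Finsupp.equivFunOnFinite.symm fun i => (m i : ℕ)) * ∏ i, x i ^ (m i : ℕ) := by
  set e : (σ → Fin p) → (σ →₀ ℕ) := fun m => Finsupp.equivFunOnFinite.symm fun i => (m i : ℕ)
  have he : e.Injective := fun m₁ m₂ h => _root_.funext fun i =>
    Fin.val_injective (congrFun (Finsupp.equivFunOnFinite.symm.injective h) i)
  have hsupp : P.support ⊆ Finset.univ.image e := by
    intro d hd
    rw [mem_restrictDegree] at hP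
    refine Finset.mem_image.mpr ⟨fun i => ⟨d i, by have := hP d hd i; omega⟩, Finset.mem_univ _, ?_⟩
    exact Finsupp.ext fun i => rfl
  rw [eval_eq', Finset.sum_subset hsupp fun d _ hd => by rw [notMem_support_iff.mp hd, zero_mul],
    Finset.sum_image fun m _ m' _ h => he h]
  rfl

open MvPolynomial in
theorem MvPolynomial.exists_eq_sum_monomials_of_card_eq {K σ : Type*} [Field K] [Fintype K]
    [Fintype σ] [DecidableEq σ] {p : ℕ} (hcard : Fintype.card K = p) (g : (σ → K) → K) :
    ∃ a : (σ → Fin p) → K, ∀ x, g x = ∑ m : σ → Fin p, a m * ∏ i, x i ^ (m i : ℕ) := by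
  have hg : g ∈ (restrictDegree σ K (Fintype.card K - 1)).map (evalₗ K σ) := by
    rw [map_restrict_dom_evalₗ]; trivial
  obtain ⟨P, hP, rfl⟩ := hg
  subst hcard
  exact ⟨_, eval_eq_sum_of_mem_restrictDegree Fintype.card_pos hP⟩

theorem ZMod.exists_eq_sum_mul_add_of_map_sub_add {ι : Type*} [Fintype ι] {q : ℕ}
    (g : (ι → ZMod q) → ZMod q)
    (hg : ∀ y₁ y₂ y₃, g (y₁ - y₂ + y₃) = g y₁ - g y₂ + g y₃) :
    ∃ c : ι → ZMod q, ∀ y, g y = ∑ i, c i * y i + g 0 := by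
  classical
  let L : (ι → ZMod q) →+ ZMod q :=
    { toFun := fun y => g y - g 0
      map_zero' := sub_self _
      map_add' := fun y₁ y₂ => by
        change g (y₁ + y₂) - g 0 = g y₁ - g 0 + (g y₂ - g 0)
        linear_combination (norm := ring_nf) hg y₁ 0 y₂ }
  refine ⟨fun i => L fun j => if i = j then 1 else 0, fun y => ?_⟩
  rw [← sub_eq_iff_eq_add]
  exact ((L.toZModLinearMap q).pi_apply_eq_sum_univ y).trans
    (Finset.sum_congr rfl fun i _ => (smul_eq_mul _ _).trans (mul_comm _ _))

def PreservesCommutatorRel {ι A B : Type*} [AddCommGroup A] [AddCommGroup B]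
    (f : (ι → A) × (ι → B) → A × B) : Prop :=
  ∀ a b c d : ι → A × B,
    (∀ i, (a i).1 = (b i).1 ∧ (b i).1 = (c i).1 ∧ a i - b i + c i = d i) →
    letI F : (ι → A × B) → A × B := fun v => f (fun i => (v i).1, fun i => (v i).2)
    (F a).1 = (F b).1 ∧ (F b).1 = (F c).1 ∧ F a - F b + F c = F d

theorem preservesCommutatorRel_iff {ι A B : Type*} [AddCommGroup A] [AddCommGroup B]
    {f : (ι → A) × (ι → B) → A × B} (hf : ∀ x y₁ y₂, (f (x, y₁)).1 = (f (x, y₂)).1) :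
    PreservesCommutatorRel f ↔
      ∀ x y₁ y₂ y₃, f (x, y₁ - y₂ + y₃) = f (x, y₁) - f (x, y₂) + f (x, y₃) := by
  constructor
  · intro h x y₁ y₂ y₃
    exact (h (fun i => (x i, y₁ i)) (fun i => (x i, y₂ i)) (fun i => (x i, y₃ i))
      (fun i => (x i, (y₁ - y₂ + y₃) i)) fun i => ⟨rfl, rfl, by ext <;> simp⟩).2.2.symm
  · intro h a b c d hrel
    have hb : (fun i => (b i).1) = fun i => (a i).1 := funext fun i => (hrel i).1.symm
    have hc : (fun i => (c i).1) = fun i => (a i).1 :=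
      funext fun i => ((hrel i).1.trans (hrel i).2.1).symm
    have hd₁ : (fun i => (d i).1) = fun i => (a i).1 := funext fun i => by
      rw [← (hrel i).2.2, Prod.fst_add, Prod.fst_sub, (hrel i).2.1, sub_add_cancel]
    have hd₂ : (fun i => (d i).2) = (fun i => (a i).2) - (fun i => (b i).2) + fun i => (c i).2 :=
      funext fun i => by rw [← (hrel i).2.2]; rfl
    dsimp only
    rw [hb, hc, hd₁, hd₂, h]
    exact ⟨hf _ _ _, hf _ _ _, rfl⟩

theorem preserves_commutator_iff_explicit_form_general (p q n : ℕ) (hp : p.Prime)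
    (f : (Fin n → ZMod p) × (Fin n → ZMod q) → ZMod p × ZMod q)
    (hf : ∀ (x₁ x₂ : Fin n → ZMod p) (y₁ y₂ : Fin n → ZMod q),
        x₁ = x₂ → (f (x₁, y₁)).1 = (f (x₂, y₂)).1) :
    (∀ a b c d : Fin n → ZMod p × ZMod q,
        (∀ i, (a i).1 = (b i).1 ∧ (b i).1 = (c i).1 ∧ a i - b i + c i = d i) →
        letI F : (Fin n → ZMod p × ZMod q) → ZMod p × ZMod q :=
          fun v => f (fun i => (v i).1, fun i => (v i).2)
        (F a).1 = (F b).1 ∧ (F b).1 = (F c).1 ∧ F a - F b + F c = F d) ↔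
      ∃ (fc : (Fin n → ZMod p) → ZMod q) (a : (Fin n → Fin p) → ZMod p)
        (f₁ : (Fin n → ZMod p) → (Fin n → ZMod q)),
        ∀ (x : Fin n → ZMod p) (y : Fin n → ZMod q),
          f (x, y) = (∑ m : Fin n → Fin p, a m * ∏ i, x i ^ (m i : ℕ),
            (∑ i, f₁ x i * y i) + fc x) := by
  have : Fact p.Prime := ⟨hp⟩
  have hfst : ∀ x y₁ y₂, (f (x, y₁)).1 = (f (x, y₂)).1 := fun x y₁ y₂ => hf x x y₁ y₂ rfl
  refine (preservesCommutatorRel_iff hfst).trans ⟨fun h => ?_, fun ⟨fc, a, f₁, hform⟩ => ?_⟩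
  · obtain ⟨a, ha⟩ :=
      MvPolynomial.exists_eq_sum_monomials_of_card_eq (ZMod.card p) fun x => (f (x, 0)).1
    choose f₁ hsnd using fun x => ZMod.exists_eq_sum_mul_add_of_map_sub_add (fun y => (f (x, y)).2)
      fun y₁ y₂ y₃ => congrArg Prod.snd (h x y₁ y₂ y₃)
    exact ⟨fun x => (f (x, 0)).2, a, f₁, fun x y => Prod.ext ((hfst x y 0).trans (ha x)) (hsnd x y)⟩
  · intro x y₁ y₂ y₃
    simp only [hform, Prod.mk_sub_mk, Prod.mk_add_mk, Pi.add_apply, Pi.sub_apply, mul_add, mul_sub,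
      Finset.sum_add_distrib, Finset.sum_sub_distrib]
    ext <;> ring

theorem preserves_commutator_iff_explicit_form (p q n : ℕ) (hp : p.Prime) (hq : q.Prime)
    (hpq : p ≠ q)
    (f : (Fin n → ZMod p) × (Fin n → ZMod q) → ZMod p × ZMod q)
    (hf : ∀ (x₁ x₂ : Fin n → ZMod p) (y₁ y₂ : Fin n → ZMod q),
        x₁ = x₂ → (f (x₁, y₁)).1 = (f (x₂, y₂)).1) :
    (∀ a b c d : Fin n → ZMod p × ZMod q,
        (∀ i, (a i).1 = (b i).1 ∧ (b i).1 = (c i).1 ∧ a i - b i + c i = d i) →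
        letI F : (Fin n → ZMod p × ZMod q) → ZMod p × ZMod q :=
          fun v => f (fun i => (v i).1, fun i => (v i).2)
        (F a).1 = (F b).1 ∧ (F b).1 = (F c).1 ∧ F a - F b + F c = F d) ↔
      ∃ (fc : (Fin n → ZMod p) → ZMod q) (a : (Fin n → Fin p) → ZMod p)
        (f₁ : (Fin n → ZMod p) → (Fin n → ZMod q)),
        ∀ (x : Fin n → ZMod p) (y : Fin n → ZMod q),
          f (x, y) = (∑ m : Fin n → Fin p, a m * ∏ i, x i ^ (m i : ℕ),
            (∑ i, f₁ x i * y i) + fc x) :=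
  preserves_commutator_iff_explicit_form_general p q n hp f hf
end

section
/- Let p and q be distinct primes. If C and D are clones on ZMod p × ZMod q containing addition, and for every function r : (ZMod q)^l → ZMod p and every 0 ≤ i ≤ p the induced monomial function (x,y) ↦ (r(y₁,...,y_l)·x₁⋯xᵢ, 0) lies in C iff it lies in D, and symmetrically for every r' : (ZMod p)^l → ZMod q and every 0 ≤ j ≤ q the function (x,y) ↦ (0, r'(x₁,...,x_l)·y₁⋯yⱼ) lies in C iff it lies in D, then C = D. -/
/-- The induced monomial function `(x, y) ↦ (r(y₁,…,y_l) · x₁⋯xᵢ, 0)`, of arity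
`max l i`, for a coefficient function `r : (ZMod q)^l → ZMod p`. -/
def indMonP (p q l i : ℕ) (r : (Fin l → ZMod q) → ZMod p) :
    (Fin (max l i) → ZMod p × ZMod q) → ZMod p × ZMod q :=
  fun x => (r (fun j => (x (Fin.castLE (le_max_left l i) j)).2) *
    ∏ j : Fin i, (x (Fin.castLE (le_max_right l i) j)).1, 0)

/-- The induced monomial function `(x, y) ↦ (0, r'(x₁,…,x_l) · y₁⋯yⱼ)`, of arity
`max l j`, for a coefficient function `r' : (ZMod p)^l → ZMod q`. -/
def indMonQ (p q l j : ℕ) (r' : (Fin l → ZMod p) → ZMod q) :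
    (Fin (max l j) → ZMod p × ZMod q) → ZMod p × ZMod q :=
  fun x => (0, r' (fun i => (x (Fin.castLE (le_max_left l j) i)).1) *
    ∏ i : Fin j, (x (Fin.castLE (le_max_right l j) i)).2)

/-!
Multiplying by the Chinese-remainder idempotents splits every `f ∈ C` as `(f₁, 0) + (0, f₂)`,
and conjugating by `Prod.swap` exchanges the two halves, so it suffices to move `(f₁, 0)` into
`D`. Doubling the arguments turns `f₁` into a function `Φ y u` of `y ∈ (ZMod q)ⁿ` and
`u ∈ (ZMod p)ⁿ` read from different arguments. Vandermonde interpolation, carried out inside the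
clone by rescaling the `u`-arguments, extracts each monomial component `c_m(y) uᵐ` (all exponents
`< p`), and these sum back to `Φ`. Polarization turns a component into an induced monomial of
degree `|m|`, and identifying `p` of its variables (`x ^ p = x`) lowers the degree to at most
`p`, where the hypothesis moves it from `C` to `D`. In `D` the degree is raised again by
substituting the monomial into itself `p - 1` times (`c ^ p = c`), and identifying variables gives
back the component.
-/

theorem exists_natCast_succ_eq_of_coprime {p q : ℕ} [NeZero p] [NeZero q] (hpq : p.Coprime q)
    (s : ZMod p × ZMod q) : ∃ k : ℕ, ((k + 1 : ℕ) : ZMod p × ZMod q) = s := by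
  set t := (ZMod.chineseRemainder hpq).symm s
  refine ⟨t.val + p * q - 1, ?_⟩
  have hpq0 : 0 < p * q := Nat.mul_pos (NeZero.pos p) (NeZero.pos q)
  rw [Nat.sub_add_cancel (by omega), ← map_natCast (ZMod.chineseRemainder hpq), Nat.cast_add,
    ZMod.natCast_self, add_zero, ZMod.natCast_zmod_val, RingEquiv.apply_symm_apply]

theorem ZMod.mul_pow_sub_one_mul_eq_self {p : ℕ} [Fact p.Prime] (a : ZMod p) (j : ℕ) :
    a * a ^ ((p - 1) * j) = a := by
  rcases eq_or_ne a 0 with rfl | ha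
  · simp
  · rw [pow_mul, ZMod.pow_card_sub_one_eq_one ha, one_pow, mul_one]

namespace IsClone

section General

variable {A : Type*} {K : ∀ n : ℕ, Set ((Fin n → A) → A)} (hK : IsClone K)
include hK

theorem proj_mem {n : ℕ} (i : Fin n) : (fun x => x i) ∈ K n := hK.1 n i

theorem comp_mem {n m : ℕ} {f : (Fin n → A) → A} {g : Fin n → (Fin m → A) → A}
    (hf : f ∈ K n) (hg : ∀ i, g i ∈ K m) : (fun x => f fun i => g i x) ∈ K m :=
  hK.2 n m f g hf hg

theorem rename_mem {n m : ℕ} {f : (Fin n → A) → A} (hf : f ∈ K n) (σ : Fin n → Fin m) :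
    (fun x => f fun i => x (σ i)) ∈ K m :=
  hK.comp_mem hf fun i => hK.proj_mem (σ i)

end General

section Additive

variable {p q : ℕ} {K : ∀ n : ℕ, Set ((Fin n → ZMod p × ZMod q) → ZMod p × ZMod q)}
  (hK : IsClone K) (hadd : (fun x : Fin 2 → ZMod p × ZMod q => x 0 + x 1) ∈ K 2)
include hK hadd

theorem add_mem {n : ℕ} {f g : (Fin n → ZMod p × ZMod q) → ZMod p × ZMod q}
    (hf : f ∈ K n) (hg : g ∈ K n) : (fun x => f x + g x) ∈ K n :=
  hK.comp_mem (g := ![f, g]) hadd fun i => by fin_cases i <;> assumption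

theorem sum_mem {n : ℕ} {ι : Type*} {s : Finset ι} (hs : s.Nonempty)
    {g : ι → (Fin n → ZMod p × ZMod q) → ZMod p × ZMod q} (hg : ∀ i ∈ s, g i ∈ K n) :
    (fun x => ∑ i ∈ s, g i x) ∈ K n := by
  rw [← Finset.sum_fn]
  exact Finset.sum_induction_nonempty g (· ∈ K n) (fun _ _ => hK.add_mem hadd) hs hg

theorem nsmul_succ_mem {n : ℕ} {f : (Fin n → ZMod p × ZMod q) → ZMod p × ZMod q}
    (hf : f ∈ K n) (k : ℕ) : (fun x => (k + 1) • f x) ∈ K n := by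
  induction k with
  | zero => simpa using hf
  | succ k ih => simpa only [succ_nsmul] using hK.add_mem hadd ih hf

variable [NeZero p] [NeZero q] (hpq : p.Coprime q)
include hpq

theorem mul_left_mem (s : ZMod p × ZMod q) {n : ℕ}
    {f : (Fin n → ZMod p × ZMod q) → ZMod p × ZMod q} (hf : f ∈ K n) :
    (fun x => s * f x) ∈ K n := by
  obtain ⟨k, rfl⟩ := exists_natCast_succ_eq_of_coprime hpq s
  simpa only [← nsmul_eq_mul, Nat.cast_id] using hK.nsmul_succ_mem hadd hf k

theorem fst_mem {n : ℕ} {f : (Fin n → ZMod p × ZMod q) → ZMod p × ZMod q} (hf : f ∈ K n) :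
    (fun x => ((f x).1, 0)) ∈ K n := by
  convert hK.mul_left_mem hadd hpq (1, 0) hf using 2 with x
  ext <;> simp

theorem pair_mem {n : ℕ} (i j : Fin n) : (fun x => ((x i).1, (x j).2)) ∈ K n := by
  convert hK.add_mem hadd (hK.mul_left_mem hadd hpq (1, 0) (hK.proj_mem i))
    (hK.mul_left_mem hadd hpq (0, 1) (hK.proj_mem j)) using 2 with x
  ext <;> simp

end Additive

end IsClone

section Monomial

variable {p q : ℕ} {K : ∀ n : ℕ, Set ((Fin n → ZMod p × ZMod q) → ZMod p × ZMod q)}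
  {l : ℕ} {c : (Fin l → ZMod q) → ZMod p}

/-- The induced monomial with its variables placed by `v` and `w`; `indMonP` is the placement
by `Fin.castLE`. -/
def monomialOp {d k : ℕ} (c : (Fin l → ZMod q) → ZMod p) (v : Fin l → Fin k)
    (w : Fin d → Fin k) : (Fin k → ZMod p × ZMod q) → ZMod p × ZMod q :=
  fun x => (c (fun j => (x (v j)).2) * ∏ j, (x (w j)).1, 0)

def HasMonomial (K : ∀ n : ℕ, Set ((Fin n → ZMod p × ZMod q) → ZMod p × ZMod q))
    (c : (Fin l → ZMod q) → ZMod p) (d : ℕ) : Prop :=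
  ∀ k (v : Fin l → Fin k) (w : Fin d → Fin k), monomialOp c v w ∈ K k

theorem IsClone.monomialOp_mem_of_mem {d k : ℕ} (hK : IsClone K)
    (hadd : (fun x : Fin 2 → ZMod p × ZMod q => x 0 + x 1) ∈ K 2)
    [NeZero p] [NeZero q] (hpq : p.Coprime q) {v : Fin l → Fin k} {w : Fin d → Fin k}
    (h : monomialOp c v w ∈ K k) {k' : ℕ} (a b : Fin k → Fin k') :
    monomialOp c (b ∘ v) (a ∘ w) ∈ K k' :=
  hK.comp_mem (g := fun i x => ((x (a i)).1, (x (b i)).2)) h fun i =>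
    hK.pair_mem hadd hpq (a i) (b i)

theorem IsClone.hasMonomial_of_mem {d : ℕ} (hK : IsClone K)
    (h : monomialOp c (Fin.castAdd d) (Fin.natAdd l) ∈ K (l + d)) : HasMonomial K c d := by
  intro k v w
  convert hK.rename_mem h (Fin.append v w) using 1
  funext x
  simp [monomialOp]

theorem hasMonomial_iff_indMonP {d : ℕ} (hK : IsClone K)
    (hadd : (fun x : Fin 2 → ZMod p × ZMod q => x 0 + x 1) ∈ K 2)
    [NeZero p] [NeZero q] (hpq : p.Coprime q) :
    HasMonomial K c d ↔ indMonP p q l d c ∈ K (max l d) := by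
  refine ⟨fun h => h _ _ _, fun h => hK.hasMonomial_of_mem ?_⟩
  let a (i : Fin (max l d)) : Fin (l + d) :=
    if hi : (i : ℕ) < d then Fin.natAdd l ⟨i, hi⟩ else Fin.castAdd d ⟨i, by omega⟩
  let b (i : Fin (max l d)) : Fin (l + d) :=
    if hi : (i : ℕ) < l then Fin.castAdd d ⟨i, hi⟩ else Fin.natAdd l ⟨i, by omega⟩
  convert hK.monomialOp_mem_of_mem hadd hpq (v := Fin.castLE (le_max_left l d))
    (w := Fin.castLE (le_max_right l d)) h a b using 2 <;> funext j <;> simp [a, b, Fin.ext_iff]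

theorem HasMonomial.of_add_mul [Fact p.Prime] {d j : ℕ}
    (h : HasMonomial K c (d + 1 + (p - 1) * j)) : HasMonomial K c (d + 1) := by
  intro k v w
  convert h k v (Fin.append w fun _ => w 0) using 1
  funext x
  simp only [monomialOp, Fin.prod_univ_add (a := d + 1), Fin.append_left, Fin.append_right,
    Finset.prod_const, Finset.card_univ, Fintype.card_fin]
  congr 2
  rw [Fin.prod_univ_succ, mul_right_comm, ZMod.mul_pow_sub_one_mul_eq_self]

theorem HasMonomial.mul {a b : ℕ} {c' : (Fin l → ZMod q) → ZMod p} (hK : IsClone K)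
    (h : HasMonomial K c (a + 1)) (h' : HasMonomial K c' b) : HasMonomial K (c * c') (a + b) := by
  intro k v w
  let sx : Fin (a + 1) → (Fin k → ZMod p × ZMod q) → ZMod p × ZMod q :=
    Fin.snoc (fun i x => x (w (Fin.castAdd b i))) (monomialOp c' v (w ∘ Fin.natAdd a))
  have hsx : ∀ i, sx i ∈ K k := Fin.lastCases (by simpa [sx] using h' k v _)
    fun i => by simpa [sx] using hK.proj_mem (w (Fin.castAdd b i))
  have hsub : ∀ i, Fin.append (fun j x => x (v j)) sx i ∈ K k :=
    Fin.addCases (fun j => by simpa using hK.proj_mem (v j)) fun i => by simpa using hsx i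
  convert hK.comp_mem (h _ (Fin.castAdd (a + 1)) (Fin.natAdd l)) hsub using 1
  funext x
  simp [monomialOp, sx, Fin.prod_univ_add (a := a) (b := b), Fin.prod_univ_castSucc]
  ring

theorem HasMonomial.pow {a : ℕ} (hK : IsClone K) (h : HasMonomial K c (a + 1)) (k : ℕ) :
    HasMonomial K (c ^ (k + 1)) (a * (k + 1) + 1) := by
  induction k with
  | zero => simpa using h
  | succ k ih =>
    have := ih.mul hK h
    rwa [← pow_succ, show a * (k + 1) + (a + 1) = a * (k + 1 + 1) + 1 by ring] at this

/-- Substituting the monomial into its own last variable `p - 1` times gives coefficient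
`c ^ p = c` and degree `(d + 1) * p + 1`, which `of_add_mul` lowers to `d + 2 + (p - 1)`. -/
theorem HasMonomial.add_sub_one [Fact p.Prime] {d : ℕ} (hK : IsClone K)
    (h : HasMonomial K c (d + 2)) : HasMonomial K c (d + 2 + (p - 1)) := by
  have hp := (Fact.out : p.Prime).two_le
  have hpow := h.pow hK (p - 1)
  rw [Nat.sub_add_cancel (by omega), show c ^ p = c from funext fun y => ZMod.pow_card _] at hpow
  rw [show d + 2 + (p - 1) = d + 1 + (p - 1) + 1 by omega]
  refine HasMonomial.of_add_mul (K := K) (j := d) ?_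
  convert hpow using 1
  obtain ⟨r, rfl⟩ : ∃ r, p = r + 1 := ⟨p - 1, by omega⟩
  simp only [Nat.add_sub_cancel]
  ring

theorem HasMonomial.transfer [Fact p.Prime]
    {C D : ∀ n : ℕ, Set ((Fin n → ZMod p × ZMod q) → ZMod p × ZMod q)} (hD : IsClone D)
    (h : ∀ i ≤ p, HasMonomial C c i → HasMonomial D c i)
    {d : ℕ} (hd : HasMonomial C c d) : HasMonomial D c d := by
  have hp := (Fact.out : p.Prime).two_le
  induction d using Nat.strong_induction_on with
  | _ d ih =>
    by_cases hdp : d ≤ p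
    · exact h d hdp hd
    obtain ⟨e, rfl⟩ : ∃ e, d = e + 2 + (p - 1) := ⟨d - (p + 1), by omega⟩
    have hlow : HasMonomial C c (e + 2) :=
      HasMonomial.of_add_mul (K := C) (j := 1) (by simpa using hd)
    exact (ih (e + 2) (by omega) hlow).add_sub_one hD

end Monomial

section Interpolation

variable {p : ℕ} [Fact p.Prime]

/-- The inverse of the Vandermonde matrix `(a ^ k)`, with rows indexed by `a : ZMod p` and columns
by the exponents `k < p`. -/
noncomputable def interpWeight (k : Fin p) (a : ZMod p) : ZMod p :=
  (Matrix.vandermonde (ZMod.finEquiv p))⁻¹ k ((ZMod.finEquiv p).symm a)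

theorem isUnit_det_vandermonde_finEquiv : IsUnit (Matrix.vandermonde (ZMod.finEquiv p)).det :=
  isUnit_iff_ne_zero.mpr (Matrix.det_vandermonde_ne_zero_iff.mpr (ZMod.finEquiv p).injective)

theorem sum_interpWeight_mul_pow (k k' : Fin p) :
    ∑ a, interpWeight k a * a ^ (k' : ℕ) = if k = k' then 1 else 0 := by
  rw [← (ZMod.finEquiv p).toEquiv.sum_comp, ← Matrix.one_apply,
    ← Matrix.nonsing_inv_mul _ isUnit_det_vandermonde_finEquiv, Matrix.mul_apply]
  simp [interpWeight, Matrix.vandermonde_apply]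

theorem sum_pow_mul_interpWeight (u a : ZMod p) :
    ∑ k : Fin p, u ^ (k : ℕ) * interpWeight k a = if u = a then 1 else 0 := by
  have h := congrFun (congrFun (Matrix.mul_nonsing_inv _ isUnit_det_vandermonde_finEquiv)
    ((ZMod.finEquiv p).symm u)) ((ZMod.finEquiv p).symm a)
  simpa [Matrix.mul_apply, Matrix.one_apply, interpWeight, Matrix.vandermonde_apply] using h

variable {N : ℕ}

/-- The coefficient of `∏ t, u t ^ m t` in the expansion of a function `(ZMod p)^N → ZMod p` as a
polynomial of degree `< p` in each variable. -/
noncomputable def interpCoeff (m : Fin N → Fin p) :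
    ((Fin N → ZMod p) → ZMod p) →ₗ[ZMod p] ZMod p where
  toFun φ := ∑ a, (∏ t, interpWeight (m t) (a t)) * φ a
  map_add' φ ψ := by simp [mul_add, Finset.sum_add_distrib]
  map_smul' r φ := by simp [Finset.mul_sum, mul_left_comm]

theorem interpCoeff_apply (m : Fin N → Fin p) (φ : (Fin N → ZMod p) → ZMod p) :
    interpCoeff m φ = ∑ a, (∏ t, interpWeight (m t) (a t)) * φ a := rfl

theorem interpCoeff_monomial (m : Fin N → Fin p) {m' : Fin N → ℕ} (hm' : ∀ t, m' t < p) :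
    interpCoeff m (fun u => ∏ t, u t ^ m' t) = if ∀ t, (m t : ℕ) = m' t then 1 else 0 := by
  classical
  simp only [interpCoeff_apply, ← Finset.prod_mul_distrib]
  rw [← Fintype.prod_sum (fun t j => interpWeight (m t) j * j ^ m' t)]
  have h1 (t : Fin N) := sum_interpWeight_mul_pow (m t) ⟨m' t, hm' t⟩
  simp only [Fin.ext_iff] at h1
  simp [h1, Finset.prod_boole]

theorem sum_interpCoeff_mul_monomial (φ : (Fin N → ZMod p) → ZMod p) (u : Fin N → ZMod p) :
    ∑ m : Fin N → Fin p, interpCoeff m φ * ∏ t, u t ^ (m t : ℕ) = φ u := by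
  classical
  simp only [interpCoeff_apply, Finset.sum_mul]
  rw [Finset.sum_comm]
  have h (a : Fin N → ZMod p) : ∑ m : Fin N → Fin p, (∏ t, interpWeight (m t) (a t)) * φ a *
      ∏ t, u t ^ (m t : ℕ) = φ a * ∏ t, ∑ k : Fin p, u t ^ (k : ℕ) * interpWeight k (a t) := by
    rw [Fintype.prod_sum, Finset.mul_sum]
    refine Finset.sum_congr rfl fun m _ => ?_
    rw [Finset.prod_mul_distrib]
    ring
  simp [h, sum_pow_mul_interpWeight, Finset.prod_boole, ← funext_iff]

theorem interpCoeff_comp_mul (m : Fin N → Fin p) (φ : (Fin N → ZMod p) → ZMod p)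
    (u : Fin N → ZMod p) :
    interpCoeff m (fun a => φ (a * u)) = interpCoeff m φ * ∏ t, u t ^ (m t : ℕ) := by
  classical
  have h : (fun a => φ (a * u)) = ∑ m' : Fin N → Fin p,
      (interpCoeff m' φ * ∏ t, u t ^ (m' t : ℕ)) • fun a => ∏ t, a t ^ (m' t : ℕ) := by
    funext a
    rw [← sum_interpCoeff_mul_monomial φ (a * u), Finset.sum_apply]
    refine Finset.sum_congr rfl fun m' _ => ?_
    simp only [Pi.mul_apply, mul_pow, Finset.prod_mul_distrib, Pi.smul_apply, smul_eq_mul]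
    ring
  have hmono (m' : Fin N → Fin p) :
      interpCoeff m (fun a => ∏ t, a t ^ (m' t : ℕ)) = if m = m' then 1 else 0 := by
    simp [interpCoeff_monomial _ fun t => (m' t).isLt, Fin.val_inj, funext_iff]
  simp [h, hmono]

end Interpolation

section Separated

variable {p q : ℕ} {K : ∀ n : ℕ, Set ((Fin n → ZMod p × ZMod q) → ZMod p × ZMod q)} {n N : ℕ}

def sepOp (Φ : (Fin n → ZMod q) → (Fin N → ZMod p) → ZMod p) :
    (Fin (n + N) → ZMod p × ZMod q) → ZMod p × ZMod q :=
  fun x => (Φ (fun j => (x (Fin.castAdd N j)).2) (fun t => (x (Fin.natAdd n t)).1), 0)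

/-- Lists each `t : Fin N` exactly `m t` times. -/
def repeatEach (m : Fin N → ℕ) (j : Fin (∑ t, m t)) : Fin N := (finSigmaFinEquiv.symm j).1

theorem prod_repeatEach {M : Type*} [CommMonoid M] (m : Fin N → ℕ) (u : Fin N → M) :
    ∏ j, u (repeatEach m j) = ∏ t, u t ^ m t := by
  rw [← finSigmaFinEquiv.prod_comp]
  simp [repeatEach, Fintype.prod_sigma]

theorem repeatEach_injective {m : Fin N → ℕ} (hm : ∀ t, m t ≤ 1) :
    Function.Injective (repeatEach m) :=
  have := fun t => Fin.subsingleton_iff_le_one.mpr (hm t)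
  Sigma.fst_injective.comp finSigmaFinEquiv.symm.injective

theorem sepOp_monomial_eq_monomialOp (c : (Fin n → ZMod q) → ZMod p) (m : Fin N → ℕ) :
    sepOp (fun y u => c y * ∏ t, u t ^ m t) =
      monomialOp c (Fin.castAdd N) (Fin.natAdd n ∘ repeatEach m) := by
  funext x
  simp [sepOp, monomialOp, prod_repeatEach m fun t => (x (Fin.natAdd n t)).1]

theorem HasMonomial.sepOp_mem {c : (Fin n → ZMod q) → ZMod p} {m : Fin N → ℕ}
    (h : HasMonomial K c (∑ t, m t)) : sepOp (fun y u => c y * ∏ t, u t ^ m t) ∈ K (n + N) := by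
  rw [sepOp_monomial_eq_monomialOp]
  exact h _ _ _

namespace IsClone

variable (hK : IsClone K)
include hK

theorem hasMonomial_of_injective {l d k : ℕ} {c : (Fin l → ZMod q) → ZMod p} {v : Fin l → Fin k}
    {w : Fin d → Fin k} (hvw : Function.Injective (Fin.append v w)) [Nonempty (Fin (l + d))]
    (h : monomialOp c v w ∈ K k) : HasMonomial K c d := by
  refine hK.hasMonomial_of_mem ?_
  convert hK.rename_mem h (Function.invFun (Fin.append v w)) using 1
  funext x
  have hinv := Function.leftInverse_invFun hvw
  simp only [monomialOp]
  congr 4 <;> funext j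
  · simpa using congrArg (fun i => (x i).2) (hinv (Fin.castAdd d j)).symm
  · simpa using congrArg (fun i => (x i).1) (hinv (Fin.natAdd l j)).symm

theorem hasMonomial_of_le_one {c : (Fin n → ZMod q) → ZMod p} (hn : 0 < n) {m : Fin N → ℕ}
    (hm : ∀ t, m t ≤ 1) (h : sepOp (fun y u => c y * ∏ t, u t ^ m t) ∈ K (n + N)) :
    HasMonomial K c (∑ t, m t) := by
  have : Nonempty (Fin (n + ∑ t, m t)) := ⟨⟨0, by omega⟩⟩
  rw [sepOp_monomial_eq_monomialOp] at h
  refine hK.hasMonomial_of_injective (Fin.append_injective_iff.mpr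
    ⟨Fin.castAdd_injective _ _, (Fin.natAdd_injective _ _).comp (repeatEach_injective hm),
      fun i j hij => ?_⟩) h
  simp [Fin.ext_iff] at hij
  omega

theorem fst_mem_of_sepOp_mem {f : (Fin n → ZMod p × ZMod q) → ZMod p × ZMod q}
    (h : sepOp (fun y u => (f fun j => (u j, y j)).1) ∈ K (n + n)) :
    (fun x => ((f x).1, 0)) ∈ K n := by
  simpa only [sepOp, Fin.append_left, Fin.append_right, id, Prod.mk.eta] using
    hK.rename_mem h (Fin.append id id)

variable (hadd : (fun x : Fin 2 → ZMod p × ZMod q => x 0 + x 1) ∈ K 2)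
include hadd

theorem sepOp_add_fresh_mem {Φ : (Fin n → ZMod q) → (Fin N → ZMod p) → ZMod p}
    (h : sepOp Φ ∈ K (n + N)) (t₀ : Fin N) :
    sepOp (fun y u => Φ y (Function.update (fun t => u t.castSucc) t₀
      (u t₀.castSucc + u (Fin.last N)))) ∈ K (n + (N + 1)) := by
  let sx : Fin N → (Fin (n + (N + 1)) → ZMod p × ZMod q) → ZMod p × ZMod q :=
    Function.update (fun t x => x (Fin.natAdd n t.castSucc)) t₀
      (fun x => x (Fin.natAdd n t₀.castSucc) + x (Fin.natAdd n (Fin.last N)))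
  have hsx : ∀ t, sx t ∈ K (n + (N + 1)) := by
    intro t
    by_cases ht : t = t₀
    · subst ht
      simpa [sx] using hK.add_mem hadd (hK.proj_mem _) (hK.proj_mem _)
    · simpa [sx, ht] using hK.proj_mem _
  have hsub : ∀ i, Fin.append (fun j x => x (Fin.castAdd (N + 1) j)) sx i ∈ K (n + (N + 1)) :=
    Fin.addCases (fun j => by simpa using hK.proj_mem _) fun t => by simpa using hsx t
  convert hK.comp_mem h hsub using 1
  funext x
  simp only [sepOp, Fin.append_left, Fin.append_right]
  congr 2
  funext t
  by_cases ht : t = t₀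
  · subst ht
    simp [sx]
  · simp [sx, ht]

theorem sepOp_mem_of_interpCoeff_mem [Fact p.Prime]
    {Φ : (Fin n → ZMod q) → (Fin N → ZMod p) → ZMod p}
    (h : ∀ m : Fin N → Fin p,
      sepOp (fun y u => interpCoeff m (Φ y) * ∏ t, u t ^ (m t : ℕ)) ∈ K (n + N)) :
    sepOp Φ ∈ K (n + N) := by
  convert hK.sum_mem hadd Finset.univ_nonempty fun m _ => h m using 2 with x
  ext
  · simp [sepOp, Prod.fst_sum, sum_interpCoeff_mul_monomial]
  · simp [sepOp, Prod.snd_sum]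

variable [NeZero q] (hpq : p.Coprime q)
include hpq

theorem sepOp_fst_mem [NeZero p] {f : (Fin n → ZMod p × ZMod q) → ZMod p × ZMod q}
    (hf : f ∈ K n) : sepOp (fun y u => (f fun j => (u j, y j)).1) ∈ K (n + n) :=
  hK.fst_mem hadd hpq
    (hK.comp_mem hf fun j => hK.pair_mem hadd hpq (Fin.natAdd n j) (Fin.castAdd n j))

/-- The weighted sum over `a` of the operation with its last `N` arguments scaled by `(a t, 1)`
extracts a single monomial, by `interpCoeff_comp_mul`. -/
theorem sepOp_interpCoeff_mem [Fact p.Prime]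
    {Φ : (Fin n → ZMod q) → (Fin N → ZMod p) → ZMod p} (h : sepOp Φ ∈ K (n + N))
    (m : Fin N → Fin p) :
    sepOp (fun y u => interpCoeff m (Φ y) * ∏ t, u t ^ (m t : ℕ)) ∈ K (n + N) := by
  let scale (a : Fin N → ZMod p) :
      Fin (n + N) → (Fin (n + N) → ZMod p × ZMod q) → ZMod p × ZMod q :=
    Fin.append (fun j x => x (Fin.castAdd N j)) fun t x => (a t, 1) * x (Fin.natAdd n t)
  have hscale : ∀ a i, scale a i ∈ K (n + N) := fun a =>
    Fin.addCases (fun j => by simpa [scale] using hK.proj_mem _)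
      fun t => by simpa [scale] using hK.mul_left_mem hadd hpq _ (hK.proj_mem _)
  convert hK.sum_mem hadd Finset.univ_nonempty (s := Finset.univ)
    (g := fun a x => ((∏ t, interpWeight (m t) (a t), 0) * sepOp Φ fun i => scale a i x))
    (fun a _ => hK.mul_left_mem hadd hpq _ (hK.comp_mem h (hscale a))) using 2 with x
  ext
  · simp only [sepOp, Prod.fst_sum]
    rw [← interpCoeff_comp_mul, interpCoeff_apply]
    simp [scale, Pi.mul_def]
  · simp [sepOp, Prod.snd_sum]

end IsClone

end Separated

section Polarization

theorem prod_update_add_pow {R : Type*} [CommSemiring R] {N : ℕ} (u : Fin (N + 1) → R)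
    (m : Fin N → ℕ) (t₀ : Fin N) :
    ∏ t, Function.update (fun t => u t.castSucc) t₀ (u t₀.castSucc + u (Fin.last N)) t ^ m t =
      ∑ k ∈ Finset.range (m t₀ + 1), ((m t₀).choose k : R) *
        ∏ s, u s ^ Fin.snoc (α := fun _ => ℕ) (Function.update m t₀ k) (m t₀ - k) s := by
  set rest := ∏ t ∈ Finset.univ.erase t₀, u t.castSucc ^ m t
  have hu (z : R) :
      ∏ t ∈ Finset.univ.erase t₀, Function.update (fun t => u t.castSucc) t₀ z t ^ m t = rest :=
    Finset.prod_congr rfl fun t ht => by rw [Function.update_of_ne (Finset.ne_of_mem_erase ht)]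
  have hm (k : ℕ) :
      ∏ t ∈ Finset.univ.erase t₀, u t.castSucc ^ Function.update m t₀ k t = rest :=
    Finset.prod_congr rfl fun t ht => by rw [Function.update_of_ne (Finset.ne_of_mem_erase ht)]
  rw [← Finset.mul_prod_erase _ _ (Finset.mem_univ t₀), Function.update_self, add_pow,
    Finset.sum_mul, hu]
  refine Finset.sum_congr rfl fun k _ => ?_
  rw [Fin.prod_univ_castSucc]
  simp only [Fin.snoc_castSucc, Fin.snoc_last]
  rw [← Finset.mul_prod_erase _ _ (Finset.mem_univ t₀), Function.update_self, hm]
  ring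

variable {p : ℕ} [Fact p.Prime] {N : ℕ}

theorem interpCoeff_prod_update_add_pow {m : Fin N → ℕ} (hm : ∀ t, m t < p) (t₀ : Fin N)
    (ht₀ : 1 ≤ m t₀) (m₂ : Fin (N + 1) → Fin p)
    (hm₂ : ∀ s, (m₂ s : ℕ) = Fin.snoc (α := fun _ => ℕ) (Function.update m t₀ (m t₀ - 1)) 1 s) :
    interpCoeff m₂ (fun u => ∏ t, Function.update (fun t => u t.castSucc) t₀
      (u t₀.castSucc + u (Fin.last N)) t ^ m t) = m t₀ := by
  set e := m t₀
  set mk : ℕ → Fin (N + 1) → ℕ :=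
    fun k => Fin.snoc (α := fun _ => ℕ) (Function.update m t₀ k) (e - k)
  have he := hm t₀
  have hmk : ∀ k ≤ e, ∀ s, mk k s < p := fun k hk => Fin.lastCases
    (by simp only [mk, Fin.snoc_last]; omega) fun t => by
      by_cases ht : t = t₀
      · rw [ht]; simp only [mk, Fin.snoc_castSucc, Function.update_self]; omega
      · simpa only [mk, Fin.snoc_castSucc, Function.update_of_ne ht] using hm t
  have hcoeff : ∀ k ∈ Finset.range (e + 1),
      interpCoeff m₂ (fun u => ∏ s, u s ^ mk k s) = if k = e - 1 then 1 else 0 := by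
    intro k hk
    have hke : k ≤ e := Nat.lt_succ_iff.mp (Finset.mem_range.mp hk)
    rw [interpCoeff_monomial m₂ (hmk k hke)]
    refine if_congr ⟨fun h => ?_, fun h s => ?_⟩ rfl rfl
    · have := h (Fin.last N)
      simp only [hm₂, Fin.snoc_last, mk] at this
      omega
    · rw [hm₂, h]
      simp only [mk, show e - (e - 1) = 1 by omega]
  have hsum : (fun u : Fin (N + 1) → ZMod p => ∏ t, Function.update (fun t => u t.castSucc) t₀
      (u t₀.castSucc + u (Fin.last N)) t ^ m t) =
      ∑ k ∈ Finset.range (e + 1), (e.choose k : ZMod p) • fun u => ∏ s, u s ^ mk k s := by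
    funext u
    simp [prod_update_add_pow, mk, e, Finset.sum_apply]
  rw [hsum, map_sum]
  simp only [map_smul, smul_eq_mul]
  rw [Finset.sum_congr rfl fun k hk => by rw [hcoeff k hk]]
  simp [Nat.choose_symm_of_eq_add (Nat.sub_add_cancel ht₀).symm]

theorem sum_snoc_update (g : ℕ → ℕ) (f : Fin N → ℕ) (t₀ : Fin N) (a b : ℕ) :
    ∑ s, g (Fin.snoc (α := fun _ => ℕ) (Function.update f t₀ a) b s) + g (f t₀) =
      ∑ t, g (f t) + g a + g b := by
  have hupd :
      ∀ t, g (Function.update f t₀ a t) = Function.update (fun t => g (f t)) t₀ (g a) t :=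
    fun t => by by_cases ht : t = t₀ <;> simp [ht]
  rw [Fin.sum_univ_castSucc]
  simp only [Fin.snoc_castSucc, Fin.snoc_last, hupd,
    Finset.sum_update_of_mem (Finset.mem_univ t₀),
    Finset.sum_eq_add_sum_sdiff_singleton_of_mem (Finset.mem_univ t₀) fun t => g (f t)]
  ring

theorem snoc_update_pred_lt {m : Fin N → ℕ} (hm : ∀ t, m t < p) (t₀ : Fin N)
    (s : Fin (N + 1)) :
    Fin.snoc (α := fun _ => ℕ) (Function.update m t₀ (m t₀ - 1)) 1 s < p := by
  refine Fin.lastCases (by simpa only [Fin.snoc_last] using (Fact.out : p.Prime).one_lt)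
    (fun t => ?_) s
  by_cases ht : t = t₀
  · rw [ht]
    simp only [Fin.snoc_castSucc, Function.update_self]
    have := hm t₀
    omega
  · simpa only [Fin.snoc_castSucc, Function.update_of_ne ht] using hm t

variable {q : ℕ} {K : ∀ n : ℕ, Set ((Fin n → ZMod p × ZMod q) → ZMod p × ZMod q)}
  (hK : IsClone K) (hadd : (fun x : Fin 2 → ZMod p × ZMod q => x 0 + x 1) ∈ K 2)
  [NeZero q] (hpq : p.Coprime q) {n : ℕ} {c : (Fin n → ZMod q) → ZMod p}
include hK hadd hpq

/-- Polarization of one variable: replacing `u t₀` by `u t₀ + u'` and keeping the part linear in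
`u'` turns `u t₀ ^ e` into `e • u t₀ ^ (e - 1) * u'`, and `e` is invertible since `0 < e < p`. -/
theorem IsClone.sepOp_split_mem {m : Fin N → ℕ} (hm : ∀ t, m t < p) (t₀ : Fin N)
    (ht₀ : 1 ≤ m t₀) (h : sepOp (fun y u => c y * ∏ t, u t ^ m t) ∈ K (n + N)) :
    sepOp (fun y u => c y * ∏ s, u s ^ Fin.snoc (α := fun _ => ℕ)
      (Function.update m t₀ (m t₀ - 1)) 1 s) ∈ K (n + (N + 1)) := by
  set m' := Fin.snoc (α := fun _ => ℕ) (Function.update m t₀ (m t₀ - 1)) 1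
  have hm' : ∀ s, m' s < p := snoc_update_pred_lt hm t₀
  have hext := hK.sepOp_interpCoeff_mem hadd hpq (hK.sepOp_add_fresh_mem hadd h t₀)
    fun s => ⟨m' s, hm' s⟩
  have hcoeff (y : Fin n → ZMod q) : interpCoeff (fun s => ⟨m' s, hm' s⟩)
      (fun u : Fin (N + 1) → ZMod p => c y * ∏ t, Function.update (fun t => u t.castSucc) t₀
        (u t₀.castSucc + u (Fin.last N)) t ^ m t) = m t₀ * c y := by
    rw [show (fun u : Fin (N + 1) → ZMod p => c y * _) = c y • fun u => _ from rfl, map_smul,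
      interpCoeff_prod_update_add_pow hm t₀ ht₀ _ fun _ => rfl, smul_eq_mul, mul_comm]
  simp only [hcoeff] at hext
  have hunit : (m t₀ : ZMod p) ≠ 0 := by
    rw [Ne, ZMod.natCast_eq_zero_iff]
    exact Nat.not_dvd_of_pos_of_lt ht₀ (hm t₀)
  convert hK.mul_left_mem hadd hpq ((m t₀ : ZMod p)⁻¹, 1) hext using 2 with x
  simp [sepOp, ← mul_assoc, inv_mul_cancel₀ hunit]

theorem IsClone.hasMonomial_of_sepOp_mem (hn : 0 < n) {m : Fin N → ℕ} (hm : ∀ t, m t < p)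
    (h : sepOp (fun y u => c y * ∏ t, u t ^ m t) ∈ K (n + N)) : HasMonomial K c (∑ t, m t) := by
  induction hE : ∑ t, (m t - 1) using Nat.strong_induction_on generalizing N with
  | _ E ih =>
    by_cases hle : ∀ t, m t ≤ 1
    · exact hK.hasMonomial_of_le_one hn hle h
    obtain ⟨t₀, ht₀⟩ := not_forall.mp hle
    have hsum := sum_snoc_update id m t₀ (m t₀ - 1) 1
    have hexcess := sum_snoc_update (· - 1) m t₀ (m t₀ - 1) 1
    simp only [id] at hsum hexcess
    have hsplit := hK.sepOp_split_mem hadd hpq hm t₀ (by omega) h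
    rw [show ∑ t, m t = ∑ s, Fin.snoc (α := fun _ => ℕ) (Function.update m t₀ (m t₀ - 1)) 1 s by
      omega]
    exact ih _ (by omega) (snoc_update_pred_lt hm t₀) hsplit rfl

end Polarization

section Swap

variable {α β : Type*}

def swapOp {n : ℕ} (h : (Fin n → β × α) → β × α) : (Fin n → α × β) → α × β :=
  fun x => (h fun i => (x i).swap).swap

theorem swapOp_swapOp {n : ℕ} (f : (Fin n → α × β) → α × β) : swapOp (swapOp f) = f := by
  funext x
  simp [swapOp]

def swapClone (K : ∀ n : ℕ, Set ((Fin n → α × β) → α × β)) :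
    ∀ n : ℕ, Set ((Fin n → β × α) → β × α) :=
  fun n => {h | swapOp h ∈ K n}

theorem mem_swapClone {K : ∀ n : ℕ, Set ((Fin n → α × β) → α × β)} {n : ℕ}
    {h : (Fin n → β × α) → β × α} : h ∈ swapClone K n ↔ swapOp h ∈ K n :=
  Iff.rfl

theorem IsClone.swapClone {K : ∀ n : ℕ, Set ((Fin n → α × β) → α × β)} (hK : IsClone K) :
    IsClone (swapClone K) :=
  ⟨fun _ i => hK.proj_mem i, fun _ _ f g hf hg =>
    hK.comp_mem (f := swapOp f) (g := fun i => swapOp (g i)) hf hg⟩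

theorem add_mem_swapClone [Add α] [Add β] {K : ∀ n : ℕ, Set ((Fin n → α × β) → α × β)}
    (hadd : (fun x : Fin 2 → α × β => x 0 + x 1) ∈ K 2) :
    (fun x : Fin 2 → β × α => x 0 + x 1) ∈ swapClone K 2 :=
  hadd

theorem swapOp_indMonP (p q l i : ℕ) (r : (Fin l → ZMod p) → ZMod q) :
    swapOp (indMonP q p l i r) = indMonQ p q l i r := by
  funext x
  simp [swapOp, indMonP, indMonQ]

end Swap

section Transfer

variable {p q : ℕ} [Fact p.Prime] [Fact q.Prime]
  {C D : ∀ n : ℕ, Set ((Fin n → ZMod p × ZMod q) → ZMod p × ZMod q)}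
  (hpq : p.Coprime q) (hC : IsClone C) (hD : IsClone D)
  (hCadd : (fun x : Fin 2 → ZMod p × ZMod q => x 0 + x 1) ∈ C 2)
  (hDadd : (fun x : Fin 2 → ZMod p × ZMod q => x 0 + x 1) ∈ D 2)
include hpq hC hD hCadd hDadd

theorem fst_mem_of_indMonP_transfer
    (hP : ∀ (l i : ℕ) (r : (Fin l → ZMod q) → ZMod p), i ≤ p →
      indMonP p q l i r ∈ C (max l i) → indMonP p q l i r ∈ D (max l i))
    {n : ℕ} {f : (Fin n → ZMod p × ZMod q) → ZMod p × ZMod q} (hf : f ∈ C n) :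
    (fun x => ((f x).1, 0)) ∈ D n := by
  have htransfer {l d : ℕ} {c : (Fin l → ZMod q) → ZMod p} (h : HasMonomial C c d) :
      HasMonomial D c d :=
    h.transfer hD fun i hi hCi => (hasMonomial_iff_indMonP hD hDadd hpq).2
      (hP _ _ _ hi ((hasMonomial_iff_indMonP hC hCadd hpq).1 hCi))
  rcases Nat.eq_zero_or_pos n with rfl | hn
  · -- `(f.1, 0)` is itself an induced monomial of degree `0`
    have hC0 : HasMonomial C (fun _ : Fin 0 → ZMod q => (f Fin.elim0).1) 0 := by
      refine hC.hasMonomial_of_mem ?_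
      convert hC.fst_mem hCadd hpq hf using 2 with x
      simp [monomialOp, show x = Fin.elim0 from funext fun i => i.elim0]
    convert htransfer hC0 0 Fin.elim0 Fin.elim0 using 2 with x
    simp [monomialOp, show x = Fin.elim0 from funext fun i => i.elim0]
  · refine hD.fst_mem_of_sepOp_mem (hD.sepOp_mem_of_interpCoeff_mem hDadd fun m => ?_)
    exact (htransfer (hC.hasMonomial_of_sepOp_mem hCadd hpq hn (fun t => (m t).isLt)
      (hC.sepOp_interpCoeff_mem hCadd hpq (hC.sepOp_fst_mem hCadd hpq hf) m))).sepOp_mem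

theorem snd_mem_of_indMonQ_transfer
    (hQ : ∀ (l j : ℕ) (r' : (Fin l → ZMod p) → ZMod q), j ≤ q →
      indMonQ p q l j r' ∈ C (max l j) → indMonQ p q l j r' ∈ D (max l j))
    {n : ℕ} {f : (Fin n → ZMod p × ZMod q) → ZMod p × ZMod q} (hf : f ∈ C n) :
    (fun x => (0, (f x).2)) ∈ D n :=
  fst_mem_of_indMonP_transfer hpq.symm hC.swapClone hD.swapClone (add_mem_swapClone hCadd)
    (add_mem_swapClone hDadd)
    (fun l i r hi h => by
      simpa only [mem_swapClone, swapOp_indMonP] using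
        hQ l i r hi (by simpa only [mem_swapClone, swapOp_indMonP] using h))
    (f := swapOp f) (by simpa only [mem_swapClone, swapOp_swapOp] using hf)

theorem mem_of_indMon_transfer
    (hP : ∀ (l i : ℕ) (r : (Fin l → ZMod q) → ZMod p), i ≤ p →
      indMonP p q l i r ∈ C (max l i) → indMonP p q l i r ∈ D (max l i))
    (hQ : ∀ (l j : ℕ) (r' : (Fin l → ZMod p) → ZMod q), j ≤ q →
      indMonQ p q l j r' ∈ C (max l j) → indMonQ p q l j r' ∈ D (max l j))
    {n : ℕ} {f : (Fin n → ZMod p × ZMod q) → ZMod p × ZMod q} (hf : f ∈ C n) : f ∈ D n := by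
  simpa using hD.add_mem hDadd (fst_mem_of_indMonP_transfer hpq hC hD hCadd hDadd hP hf)
    (snd_mem_of_indMonQ_transfer hpq hC hD hCadd hDadd hQ hf)

end Transfer

theorem clones_determined_by_induced_monomials (p q : ℕ) (hp : p.Prime) (hq : q.Prime)
    (hpq : p ≠ q)
    (C D : ∀ n : ℕ, Set ((Fin n → ZMod p × ZMod q) → ZMod p × ZMod q))
    (hC : IsClone C) (hD : IsClone D)
    (hCadd : (fun x : Fin 2 → ZMod p × ZMod q => x 0 + x 1) ∈ C 2)
    (hDadd : (fun x : Fin 2 → ZMod p × ZMod q => x 0 + x 1) ∈ D 2)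
    (hP : ∀ (l i : ℕ) (r : (Fin l → ZMod q) → ZMod p), i ≤ p →
      (indMonP p q l i r ∈ C (max l i) ↔ indMonP p q l i r ∈ D (max l i)))
    (hQ : ∀ (l j : ℕ) (r' : (Fin l → ZMod p) → ZMod q), j ≤ q →
      (indMonQ p q l j r' ∈ C (max l j) ↔ indMonQ p q l j r' ∈ D (max l j))) :
    C = D := by
  have := Fact.mk hp
  have := Fact.mk hq
  have hcop : p.Coprime q := (Nat.coprime_primes hp hq).mpr hpq
  funext n
  ext f
  exact ⟨mem_of_indMon_transfer hcop hC hD hCadd hDadd (fun l i r hi => (hP l i r hi).1)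
      (fun l j r hj => (hQ l j r hj).1),
    mem_of_indMon_transfer hcop hD hC hDadd hCadd (fun l i r hi => (hP l i r hi).2)
      (fun l j r hj => (hQ l j r hj).2)⟩
end
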